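/- arXiv:2401.14598 — 8 statements merged into one kernel-verified Lean document; each statement's English description precedes it below -/
import Mathlib

section
/- If L is a linear order whose quotient by the 1-block relation is densely ordered with at least two elements, and all 1-blocks are finite, then choosing one representative from each 1-block yields a suborder of L that is a countable dense linear order (possibly with endpoints). -/
/-- The 1-block relation: `x ∼₁ y` iff only finitely many elements lie strictly
between `x` and `y`. -/
def BlockRel {L : Type*} [LinearOrder L] (x y : L) : Prop :=
  {z : L | (x < z ∧ z < y) ∨ (y < z ∧ z < x)}.Finite

lemma blockRel_symm {L : Type*} [LinearOrder L] {x y : L} (h : BlockRel x y) :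
    BlockRel y x := by
  apply h.subset
  intro z hz
  rcases hz with h | h
  · exact Or.inr h
  · exact Or.inl h

lemma blockRel_trans {L : Type*} [LinearOrder L] {a b c : L}
    (h1 : BlockRel a b) (h2 : BlockRel b c) : BlockRel a c := by
  apply Set.Finite.subset ((h1.union (Set.finite_singleton b)).union h2)
  intro z hz
  rcases hz with ⟨haz, hzc⟩ | ⟨hcz, hza⟩
  · rcases lt_trichotomy z b with hb | hb | hb
    · exact Or.inl (Or.inl (Or.inl ⟨haz, hb⟩))
    · exact Or.inl (Or.inr hb)
    · exact Or.inr (Or.inl ⟨hb, hzc⟩)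
  · rcases lt_trichotomy z b with hb | hb | hb
    · exact Or.inr (Or.inr ⟨hcz, hb⟩)
    · exact Or.inl (Or.inr hb)
    · exact Or.inl (Or.inl (Or.inr ⟨hb, hza⟩))

lemma blockRel_left {L : Type*} [LinearOrder L] {x y a : L}
    (h : BlockRel x y) (hxa : x ≤ a) (hay : a ≤ y) : BlockRel x a := by
  apply h.subset
  intro z hz
  rcases hz with ⟨h1, h2⟩ | ⟨h1, h2⟩
  · exact Or.inl ⟨h1, h2.trans_le hay⟩
  · exact absurd (h2.trans_le hxa) (not_lt.mpr h1.le)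

lemma blockRel_right {L : Type*} [LinearOrder L] {x y a : L}
    (h : BlockRel x y) (hxa : x ≤ a) (hay : a ≤ y) : BlockRel a y := by
  apply h.subset
  intro z hz
  rcases hz with ⟨h1, h2⟩ | ⟨h1, h2⟩
  · exact Or.inl ⟨hxa.trans_lt h1, h2⟩
  · exact absurd (h1.trans (h2.trans_le hay)) (lt_irrefl y)

/-- If the quotient of a countable linear order `L` by the 1-block relation is
densely ordered with at least two elements and all 1-blocks are finite, then
choosing one representative of each 1-block (via a choice function `f`) yields a
suborder of `L` that is a countable dense (in itself) linear order. -/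
theorem representatives_form_countable_dense_order (L : Type*) [LinearOrder L] [Countable L]
    (f : L → L)
    (hrep : ∀ x, BlockRel x (f x))
    (hconst : ∀ x y, BlockRel x y → f x = f y)
    (hblocksFin : ∀ x, {y : L | BlockRel x y}.Finite)
    (hquotDense : ∀ x y : L, x < y → ¬ BlockRel x y →
      ∃ z, x < z ∧ z < y ∧ ¬ BlockRel x z ∧ ¬ BlockRel z y)
    (htwo : ∃ x y : L, ¬ BlockRel x y) :
    Countable {x : L // f x = x} ∧ Nontrivial {x : L // f x = x} ∧
      DenselyOrdered {x : L // f x = x} := by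
  have hfix : ∀ x, f (f x) = f x := fun x => (hconst x (f x) (hrep x)).symm
  have hiff : ∀ x y : L, f x = f y → BlockRel x y := by
    intro x y h
    exact blockRel_trans (h ▸ hrep x) (blockRel_symm (hrep y))
  refine ⟨inferInstance, ?_, ?_⟩
  · obtain ⟨x, y, hxy⟩ := htwo
    exact ⟨⟨f x, hfix x⟩, ⟨f y, hfix y⟩, fun h => hxy (hiff x y (congrArg Subtype.val h))⟩
  · constructor
    rintro ⟨a, ha⟩ ⟨b, hb⟩ hab
    simp only [Subtype.mk_lt_mk] at hab
    have hnab : ¬ BlockRel a b := fun h => absurd (ha ▸ hb ▸ hconst a b h) hab.ne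
    obtain ⟨z, haz, hzb, hnaz, hnzb⟩ := hquotDense a b hab hnab
    refine ⟨⟨f z, hfix z⟩, ?_, ?_⟩ <;> simp only [Subtype.mk_lt_mk]
    · rcases lt_trichotomy a (f z) with h | h | h
      · exact h
      · exact absurd (hiff z a (by rw [← h, ha])) (fun hh => hnaz (blockRel_symm hh))
      · exact absurd (blockRel_right (blockRel_symm (hrep z)) h.le haz.le) hnaz
    · rcases lt_trichotomy (f z) b with h | h | h
      · exact h
      · exact absurd (hiff z b (by rw [h, hb])) hnzb
      · exact absurd (blockRel_left (hrep z) hzb.le h.le) hnzb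
end

section
/- Every infinite linear order contains a suborder order-isomorphic to one of the following six orders: ℕ, ω* (reverse ℕ), ℤ, ω·ω* (a decreasing ℤ-indexed-by-ω* sequence of copies of ℕ), ω*·ω (an increasing sequence of copies of ω*), or ℚ. -/
/-- In an infinite linear order where `(· > ·)` is well-founded, there is a strictly
decreasing sequence, obtained by repeatedly removing the maximum element. -/
theorem exists_strictAnti_of_wf_gt {L : Type*} [LinearOrder L] [Infinite L]
    (hwf : WellFounded ((· > ·) : L → L → Prop)) : ∃ a : ℕ → L, StrictAnti a := by
  classical
  -- at each step, keep an infinite set together with its maximum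
  have step : ∀ s : Set L, s.Infinite →
      ∃ m ∈ s, (∀ y ∈ s, y ≤ m) ∧ (s \ {m}).Infinite := by
    intro s hs
    obtain ⟨m, hm, hmax⟩ := hwf.has_min s hs.nonempty
    refine ⟨m, hm, fun y hy => ?_, hs.diff (Set.finite_singleton m)⟩
    by_contra hlt
    exact hmax y hy (lt_of_not_ge hlt)
  choose mx hmem hmax hinf using step
  let F : ℕ → {s : Set L // s.Infinite} :=
    fun n => Nat.rec ⟨Set.univ, Set.infinite_univ⟩
      (fun _ p => ⟨p.1 \ {mx p.1 p.2}, hinf p.1 p.2⟩) n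
  set a : ℕ → L := fun n => mx (F n).1 (F n).2 with ha
  refine ⟨a, strictAnti_nat_of_succ_lt fun n => ?_⟩
  have h1 : a (n + 1) ∈ (F n).1 \ {a n} := hmem (F (n + 1)).1 (F (n + 1)).2
  have h2 : a (n + 1) ≤ a n := hmax (F n).1 (F n).2 _ h1.1
  exact lt_of_le_of_ne h2 h1.2

/-- Every infinite (countable) linear order contains a suborder order-isomorphic to
one of ℕ, ω* (reverse ℕ), ℤ, ω·ω* (a ω*-indexed decreasing sequence of copies of ℕ),
ω*·ω (an ω-indexed increasing sequence of copies of ℕ), or ℚ. -/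
theorem infinite_linearOrder_contains_one_of_six (L : Type*) [LinearOrder L]
    [Countable L] [Infinite L] :
    Nonempty (ℕ ↪o L) ∨ Nonempty (ℕᵒᵈ ↪o L) ∨ Nonempty (ℤ ↪o L) ∨
    Nonempty (Lex (ℕᵒᵈ × ℕ) ↪o L) ∨ Nonempty (Lex (ℕ × ℕᵒᵈ) ↪o L) ∨
    Nonempty (ℚ ↪o L) := by
  by_cases h : ∃ f : ℕ → L, StrictMono f
  · obtain ⟨f, hf⟩ := h
    exact Or.inl ⟨OrderEmbedding.ofStrictMono f hf⟩
  · -- no strictly increasing sequence: `>` is well-founded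
    have hwf : WellFounded ((· > ·) : L → L → Prop) := by
      rw [RelEmbedding.wellFounded_iff_isEmpty]
      constructor
      intro g
      exact h ⟨fun n => g n, fun m n hmn => g.map_rel_iff.2 hmn⟩
    obtain ⟨a, ha⟩ := exists_strictAnti_of_wf_gt hwf
    refine Or.inr (Or.inl ⟨OrderEmbedding.ofStrictMono
      (fun n : ℕᵒᵈ => a (OrderDual.ofDual n)) ?_⟩)
    intro x y hxy
    exact ha hxy
end

section
/- Every infinite linear order L has an infinite suborder A such that for all a, b ∈ A: (i) a has a predecessor in A iff it has one in L, (ii) a has a successor in A iff it has one in L, and (iii) the open interval (a,b) is nonempty in A iff it is nonempty in L, and moreover A is order-isomorphic to one of ℕ, ω*, ℤ, ω·ω*, ω*·ω, or ℚ. -/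
namespace Sigma1Like

variable {L : Type*} [LinearOrder L]

/-- finite-condensation relation: finitely many points between `a` and `b`. -/
def sim (a b : L) : Prop := (Set.Icc (min a b) (max a b)).Finite

lemma sim_refl (a : L) : sim a a := by
  simp [sim]

lemma sim_symm {a b : L} (h : sim a b) : sim b a := by
  simpa [sim, min_comm, max_comm] using h

lemma sim_of_le {a b : L} (hab : a ≤ b) (h : (Set.Icc a b).Finite) : sim a b := by
  rwa [sim, min_eq_left hab, max_eq_right hab]

lemma sim.finite_Icc {a b : L} (h : sim a b) (hab : a ≤ b) : (Set.Icc a b).Finite := by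
  rwa [sim, min_eq_left hab, max_eq_right hab] at h

lemma Icc_subset_union (a b c : L) :
    Set.Icc (min a c) (max a c) ⊆ Set.Icc (min a b) (max a b) ∪ Set.Icc (min b c) (max b c) := by
  rintro z ⟨h1, h2⟩
  rcases le_total z b with hzb | hbz
  · rcases min_le_iff.1 h1 with h | h
    · exact Or.inl ⟨min_le_iff.2 (Or.inl h), le_max_iff.2 (Or.inr hzb)⟩
    · exact Or.inr ⟨min_le_iff.2 (Or.inr h), le_max_iff.2 (Or.inl hzb)⟩
  · rcases le_max_iff.1 h2 with h | h
    · exact Or.inl ⟨min_le_iff.2 (Or.inr hbz), le_max_iff.2 (Or.inl h)⟩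
    · exact Or.inr ⟨min_le_iff.2 (Or.inl hbz), le_max_iff.2 (Or.inr h)⟩

lemma sim_trans {a b c : L} (h1 : sim a b) (h2 : sim b c) : sim a c :=
  (h1.union h2).subset (Icc_subset_union a b c)

/-- the finite-condensation class of `a`. -/
def cls (a : L) : Set L := {b | sim a b}

lemma mem_cls_self (a : L) : a ∈ cls a := sim_refl a

lemma mem_cls {a b : L} : b ∈ cls a ↔ sim a b := Iff.rfl

lemma cls_eq {a b : L} (h : sim a b) : cls a = cls b :=
  Set.ext fun _ => ⟨fun h' => sim_trans (sim_symm h) h', fun h' => sim_trans h h'⟩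

lemma sim_of_between {a b z : L} (h : sim a b) (h1 : a ≤ z) (h2 : z ≤ b) : sim a z :=
  sim_of_le h1 ((h.finite_Icc (h1.trans h2)).subset (Set.Icc_subset_Icc le_rfl h2))

lemma sim_of_mem_cls {x a b : L} (ha : a ∈ cls x) (hb : b ∈ cls x) : sim a b :=
  sim_trans (sim_symm ha) hb

lemma Ioo_subset_cls {x a b : L} (ha : a ∈ cls x) (hb : b ∈ cls x) :
    Set.Ioo a b ⊆ cls x := by
  intro z hz
  have hab : sim a b := sim_of_mem_cls ha hb
  exact sim_trans ha (sim_of_between hab hz.1.le hz.2.le)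

lemma Icc_subset_insert_Ioo {a b : L} :
    Set.Icc a b ⊆ insert a (insert b (Set.Ioo a b)) := by
  rintro z ⟨h1, h2⟩
  rcases eq_or_lt_of_le h1 with rfl | h1'
  · exact Set.mem_insert _ _
  rcases eq_or_lt_of_le h2 with rfl | h2'
  · exact Set.mem_insert_of_mem _ (Set.mem_insert _ _)
  exact Set.mem_insert_of_mem _ (Set.mem_insert_of_mem _ ⟨h1', h2'⟩)

lemma sim_of_Ioo_empty {a b : L} (hab : a ≤ b) (h : ¬ (Set.Ioo a b).Nonempty) : sim a b := by
  apply sim_of_le hab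
  rw [Set.not_nonempty_iff_eq_empty] at h
  apply Set.Finite.subset (((Set.finite_empty.insert b).insert a))
  intro z hz
  have := Icc_subset_insert_Ioo hz
  rwa [h] at this

lemma exists_between_of_not_sim {a b : L} (hab : a ≤ b) (h : ¬ sim a b) :
    ∃ z, a < z ∧ z < b := by
  by_contra hc
  push_neg at hc
  exact h (sim_of_Ioo_empty hab (fun ⟨z, hz⟩ => absurd (hc z hz.1) (not_le.2 hz.2)))

/-- `m` is the minimum of its infinite condensation class (ω-type class). -/
def IsW (m : L) : Prop := (cls m).Infinite ∧ ∀ y ∈ cls m, m ≤ y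

/-- `M` is the maximum of its infinite condensation class (ω*-type class). -/
def IsWStar (M : L) : Prop := (cls M).Infinite ∧ ∀ y ∈ cls M, y ≤ M

lemma IsW.no_max {m : L} (hm : IsW m) : ∀ a ∈ cls m, ∃ b ∈ cls m, a < b := by
  intro a ha
  by_contra h
  push_neg at h
  refine hm.1 (((ha.finite_Icc (hm.2 a ha)).subset ?_))
  intro y hy
  exact ⟨hm.2 y hy, h y hy⟩

lemma IsWStar.no_min {M : L} (hM : IsWStar M) : ∀ a ∈ cls M, ∃ b ∈ cls M, b < a := by
  intro a ha
  by_contra h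
  push_neg at h
  refine hM.1 ((((sim_symm ha).finite_Icc (hM.2 a ha)).subset ?_))
  intro y hy
  exact ⟨h y hy, hM.2 y hy⟩

lemma infinite_of_no_max {S : Set L} (hne : S.Nonempty) (h : ∀ y ∈ S, ∃ z ∈ S, y < z) :
    S.Infinite := by
  by_contra hfin
  rw [Set.not_infinite] at hfin
  obtain ⟨a, ha, hmax⟩ := Set.exists_max_image S id hfin hne
  obtain ⟨z, hz, hlt⟩ := h a ha
  exact absurd (hmax z hz) (not_le.2 hlt)

lemma infinite_of_no_min {S : Set L} (hne : S.Nonempty) (h : ∀ y ∈ S, ∃ z ∈ S, z < y) :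
    S.Infinite := by
  by_contra hfin
  rw [Set.not_infinite] at hfin
  obtain ⟨a, ha, hmin⟩ := Set.exists_min_image S id hfin hne
  obtain ⟨z, hz, hlt⟩ := h a ha
  exact absurd (hmin z hz) (not_le.2 hlt)

lemma orderIsoNat_of_finite_Iio {α : Type*} [LinearOrder α] [Infinite α]
    (h : ∀ a : α, (Set.Iio a).Finite) : Nonempty (α ≃o ℕ) := by
  classical
  let f : α → ℕ := fun a => (h a).toFinset.card
  have hf : StrictMono f := by
    intro a b hab
    apply Finset.card_lt_card
    rw [Finset.ssubset_iff_of_subset]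
    · exact ⟨a, by simp [Set.Finite.mem_toFinset, hab], by simp⟩
    · intro x hx
      simp only [Set.Finite.mem_toFinset, Set.mem_Iio] at *
      exact hx.trans hab
  have hr : (Set.range f).Infinite := Set.infinite_range_of_injective hf.injective
  haveI := hr.to_subtype
  exact ⟨(hf.orderIso f).trans (Nat.Subtype.orderIsoOfNat (Set.range f)).symm⟩

lemma orderIsoNatOD_of_finite_Ioi {α : Type*} [LinearOrder α] [Infinite α]
    (h : ∀ a : α, (Set.Ioi a).Finite) : Nonempty (α ≃o ℕᵒᵈ) := by
  haveI : Infinite αᵒᵈ := ‹Infinite α›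
  have : ∀ a : αᵒᵈ, (Set.Iio a).Finite := by
    intro a
    have := h (OrderDual.ofDual a)
    exact Set.Finite.preimage (OrderDual.ofDual.injective.injOn) this
  obtain ⟨e⟩ := orderIsoNat_of_finite_Iio (α := αᵒᵈ) this
  exact ⟨(OrderIso.dualDual α).trans e.dual⟩

lemma orderIsoInt_of {α : Type*} [LinearOrder α] [Nonempty α]
    (hIcc : ∀ a b : α, (Set.Icc a b).Finite)
    (hmin : ∀ a : α, ∃ b, b < a) (hmax : ∀ a : α, ∃ b, a < b) :
    Nonempty (α ≃o ℤ) := by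
  classical
  obtain ⟨x₀⟩ := ‹Nonempty α›
  have hfin : ∀ a b : α, (Set.Ico a b).Finite := fun a b =>
    (hIcc a b).subset Set.Ico_subset_Icc_self
  let f : α → ℤ := fun a =>
    if x₀ ≤ a then ((Set.Ico x₀ a).ncard : ℤ) else -((Set.Ico a x₀).ncard : ℤ)
  have hf : StrictMono f := by
    intro a b hab
    by_cases ha : x₀ ≤ a
    · have hb : x₀ ≤ b := ha.trans hab.le
      simp only [f, if_pos ha, if_pos hb]
      have : Set.Ico x₀ a ⊂ Set.Ico x₀ b :=
        ⟨Set.Ico_subset_Ico le_rfl hab.le, fun hsub => absurd (hsub ⟨ha, hab⟩).2 (lt_irrefl a)⟩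
      exact_mod_cast Set.ncard_lt_ncard this (hfin x₀ b)
    · by_cases hb : x₀ ≤ b
      · simp only [f, if_neg ha, if_pos hb]
        have h1 : 0 < (Set.Ico a x₀).ncard :=
          (Set.ncard_pos (hfin a x₀)).2 ⟨a, le_rfl, not_le.1 ha⟩
        omega
      · simp only [f, if_neg ha, if_neg hb]
        have : Set.Ico b x₀ ⊂ Set.Ico a x₀ :=
          ⟨Set.Ico_subset_Ico hab.le le_rfl, fun hsub => absurd (hsub ⟨le_rfl, not_le.1 ha⟩).1
            (not_le.2 hab)⟩
        have := Set.ncard_lt_ncard this (hfin a x₀)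
        omega
  -- successors and predecessors
  have hsucc : ∀ a : α, ∃ b, a < b ∧ ∀ y, a < y → b ≤ y := by
    intro a
    obtain ⟨c, hc⟩ := hmax a
    obtain ⟨b, hb, hbmin⟩ := Set.exists_min_image _ id ((hIcc a c).subset Set.Ioc_subset_Icc_self)
      ⟨c, hc, le_rfl⟩
    refine ⟨b, hb.1, fun y hy => ?_⟩
    rcases le_total y c with hyc | hcy
    · exact hbmin y ⟨hy, hyc⟩
    · exact hb.2.trans hcy
  have hpred : ∀ a : α, ∃ b, b < a ∧ ∀ y, y < a → y ≤ b := by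
    intro a
    obtain ⟨c, hc⟩ := hmin a
    obtain ⟨b, hb, hbmax⟩ := Set.exists_max_image _ id ((hIcc c a).subset Set.Ico_subset_Icc_self)
      ⟨c, le_rfl, hc⟩
    refine ⟨b, hb.2, fun y hy => ?_⟩
    rcases le_total c y with hcy | hyc
    · exact hbmax y ⟨hcy, hy⟩
    · exact hyc.trans hb.1
  have hup : ∀ a : α, ∃ b, f b = f a + 1 := by
    intro a
    obtain ⟨b, hab, hmin'⟩ := hsucc a
    refine ⟨b, ?_⟩
    by_cases ha : x₀ ≤ a
    · have hb : x₀ ≤ b := ha.trans hab.le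
      have hset : Set.Ico x₀ b = insert a (Set.Ico x₀ a) := by
        ext y
        simp only [Set.mem_Ico, Set.mem_insert_iff]
        constructor
        · rintro ⟨h1, h2⟩
          rcases lt_trichotomy y a with h | h | h
          · exact Or.inr ⟨h1, h⟩
          · exact Or.inl h
          · exact absurd (hmin' y h) (not_le.2 h2)
        · rintro (rfl | ⟨h1, h2⟩)
          · exact ⟨ha, hab⟩
          · exact ⟨h1, h2.trans hab⟩
      simp only [f, if_pos ha, if_pos hb, hset]
      rw [Set.ncard_insert_of_notMem (by simp) (hfin x₀ a)]
      push_cast; try ring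
    · have hax : a < x₀ := not_le.1 ha
      have hbx : b ≤ x₀ := hmin' x₀ hax
      rcases eq_or_lt_of_le hbx with rfl | hbx'
      · have hset : Set.Ico a b = {a} := by
          ext y
          simp only [Set.mem_Ico, Set.mem_singleton_iff]
          constructor
          · rintro ⟨h1, h2⟩
            rcases eq_or_lt_of_le h1 with rfl | h1'
            · rfl
            · exact absurd (hmin' y h1') (not_le.2 h2)
          · rintro rfl; exact ⟨le_rfl, hab⟩
        simp only [f, if_neg ha, if_pos le_rfl, hset]
        simp
      · have hset : Set.Ico a x₀ = insert a (Set.Ico b x₀) := by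
          ext y
          simp only [Set.mem_Ico, Set.mem_insert_iff]
          constructor
          · rintro ⟨h1, h2⟩
            rcases eq_or_lt_of_le h1 with rfl | h1'
            · exact Or.inl rfl
            · exact Or.inr ⟨hmin' y h1', h2⟩
          · rintro (rfl | ⟨h1, h2⟩)
            · exact ⟨le_rfl, hax⟩
            · exact ⟨(hab.trans_le h1).le, h2⟩
        have hb' : ¬ x₀ ≤ b := not_le.2 hbx'
        simp only [f, if_neg ha, if_neg hb', hset]
        rw [Set.ncard_insert_of_notMem (fun hc => absurd hc.1 (not_le.2 hab)) (hfin b x₀)]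
        push_cast; try ring
  have hdown : ∀ a : α, ∃ b, f b = f a - 1 := by
    intro a
    obtain ⟨b, hab, hmax'⟩ := hpred a
    refine ⟨b, ?_⟩
    by_cases hb : x₀ ≤ b
    · have ha : x₀ ≤ a := hb.trans hab.le
      have hset : Set.Ico x₀ a = insert b (Set.Ico x₀ b) := by
        ext y
        simp only [Set.mem_Ico, Set.mem_insert_iff]
        constructor
        · rintro ⟨h1, h2⟩
          rcases eq_or_lt_of_le (hmax' y h2) with rfl | h'
          · exact Or.inl rfl
          · exact Or.inr ⟨h1, h'⟩
        · rintro (rfl | ⟨h1, h2⟩)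
          · exact ⟨hb, hab⟩
          · exact ⟨h1, h2.trans hab⟩
      simp only [f, if_pos ha, if_pos hb, hset]
      rw [Set.ncard_insert_of_notMem (by simp) (hfin x₀ b)]
      push_cast; try ring
    · have hbx : b < x₀ := not_le.1 hb
      by_cases ha : x₀ ≤ a
      · rcases eq_or_lt_of_le ha with rfl | ha'
        · have hset : Set.Ico b x₀ = {b} := by
            ext y
            simp only [Set.mem_Ico, Set.mem_singleton_iff]
            constructor
            · rintro ⟨h1, h2⟩
              exact le_antisymm (hmax' y h2) h1
            · rintro rfl; exact ⟨le_rfl, hbx⟩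
          simp only [f, if_neg hb, if_pos le_rfl, hset]
          simp
        · exact absurd (hmax' x₀ ha') (not_le.2 hbx)
      · have hax : a < x₀ := not_le.1 ha
        have hset : Set.Ico b x₀ = insert b (Set.Ico a x₀) := by
          ext y
          simp only [Set.mem_Ico, Set.mem_insert_iff]
          constructor
          · rintro ⟨h1, h2⟩
            rcases lt_or_ge y a with h | h
            · exact Or.inl (le_antisymm (hmax' y h) h1)
            · exact Or.inr ⟨h, h2⟩
          · rintro (rfl | ⟨h1, h2⟩)
            · exact ⟨le_rfl, hbx⟩
            · exact ⟨(hab.trans_le h1).le, h2⟩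
        simp only [f, if_neg hb, if_neg ha, hset]
        rw [Set.ncard_insert_of_notMem (fun hc => absurd hc.1 (not_le.2 hab)) (hfin a x₀)]
        push_cast; try ring
  have hzero : f x₀ = 0 := by simp [f]
  have hsurj : Function.Surjective f := by
    intro n
    induction n using Int.induction_on with
    | zero => exact ⟨x₀, hzero⟩
    | succ i ih =>
        obtain ⟨a, ha⟩ := ih
        obtain ⟨b, hb⟩ := hup a
        exact ⟨b, by rw [hb, ha]⟩
    | pred i ih =>
        obtain ⟨a, ha⟩ := ih
        obtain ⟨b, hb⟩ := hdown a
        exact ⟨b, by rw [hb, ha]; try ring⟩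
  exact ⟨StrictMono.orderIsoOfSurjective f hf hsurj⟩

-- ### subtype isomorphisms for condensation classes

lemma isW_iso_nat {x : L} (hx : IsW x) : Nonempty (↥(cls x) ≃o ℕ) := by
  haveI : Infinite ↥(cls x) := hx.1.to_subtype
  apply orderIsoNat_of_finite_Iio
  intro a
  have hfin : (Set.Icc x (a : L)).Finite := (a.2 : sim x a).finite_Icc (hx.2 a a.2)
  refine Set.Finite.subset (hfin.preimage Subtype.val_injective.injOn) ?_
  intro y hy
  exact ⟨hx.2 y y.2, Subtype.coe_le_coe.2 hy.le⟩

lemma isWStar_iso_natOD {x : L} (hx : IsWStar x) : Nonempty (↥(cls x) ≃o ℕᵒᵈ) := by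
  haveI : Infinite ↥(cls x) := hx.1.to_subtype
  apply orderIsoNatOD_of_finite_Ioi
  intro a
  have hfin : (Set.Icc (a : L) x).Finite := (sim_symm (a.2 : sim x a)).finite_Icc (hx.2 a a.2)
  refine Set.Finite.subset (hfin.preimage Subtype.val_injective.injOn) ?_
  intro y hy
  exact ⟨Subtype.coe_le_coe.2 hy.le, hx.2 y y.2⟩

lemma cls_iso_int {x : L} (hinf : (cls x).Infinite)
    (hmin : ∀ a ∈ cls x, ∃ b ∈ cls x, b < a) (hmax : ∀ a ∈ cls x, ∃ b ∈ cls x, a < b) :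
    Nonempty (↥(cls x) ≃o ℤ) := by
  haveI : Nonempty ↥(cls x) := ⟨⟨x, mem_cls_self x⟩⟩
  apply orderIsoInt_of
  · intro a b
    have hfin : (Set.Icc (min (a : L) (b : L)) (max (a : L) (b : L))).Finite :=
      sim_of_mem_cls a.2 b.2
    refine Set.Finite.subset (hfin.preimage Subtype.val_injective.injOn) ?_
    intro y hy
    exact ⟨(min_le_left _ _).trans (Subtype.coe_le_coe.2 hy.1),
      (Subtype.coe_le_coe.2 hy.2).trans (le_max_right _ _)⟩
  · rintro ⟨a, ha⟩
    obtain ⟨b, hb, hlt⟩ := hmin a ha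
    exact ⟨⟨b, hb⟩, hlt⟩
  · rintro ⟨a, ha⟩
    obtain ⟨b, hb, hlt⟩ := hmax a ha
    exact ⟨⟨b, hb⟩, hlt⟩

-- ### unions of blocks

lemma iUnion_desc_iso {D : ℕ → Set L} (hiso : ∀ k, Nonempty (↥(D k) ≃o ℕ))
    (hdesc : ∀ k l, k < l → ∀ x ∈ D l, ∀ y ∈ D k, x < y) :
    Nonempty (↥(⋃ k, D k) ≃o Lex (ℕᵒᵈ × ℕ)) := by
  classical
  have e : ∀ k, ℕ ≃o ↥(D k) := fun k => (hiso k).some.symm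
  let g : Lex (ℕᵒᵈ × ℕ) → ↥(⋃ k, D k) := fun p =>
    ⟨(e (OrderDual.ofDual (ofLex p).1) (ofLex p).2 : L),
      Set.mem_iUnion.2 ⟨_, (e (OrderDual.ofDual (ofLex p).1) (ofLex p).2).2⟩⟩
  have hg : StrictMono g := by
    intro p q hpq
    have := Prod.Lex.lt_iff.1 hpq
    rcases this with h | ⟨h1, h2⟩
    · have hlt : OrderDual.ofDual (ofLex q).1 < OrderDual.ofDual (ofLex p).1 := h
      exact hdesc _ _ hlt _ (e _ (ofLex p).2).2 _ (e _ (ofLex q).2).2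
    · show (g p : L) < (g q : L)
      simp only [g]
      rw [h1]
      exact Subtype.coe_lt_coe.2 ((e (OrderDual.ofDual (ofLex q).1)).strictMono h2)
  have hsurj : Function.Surjective g := by
    rintro ⟨x, hx⟩
    obtain ⟨k, hk⟩ := Set.mem_iUnion.1 hx
    refine ⟨toLex (OrderDual.toDual k, (e k).symm ⟨x, hk⟩), ?_⟩
    apply Subtype.ext
    show ((e k) ((e k).symm ⟨x, hk⟩) : L) = x
    rw [OrderIso.apply_symm_apply]
  exact ⟨(StrictMono.orderIsoOfSurjective g hg hsurj).symm⟩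

lemma iUnion_asc_iso {D : ℕ → Set L} (hiso : ∀ k, Nonempty (↥(D k) ≃o ℕᵒᵈ))
    (hasc : ∀ k l, k < l → ∀ x ∈ D l, ∀ y ∈ D k, y < x) :
    Nonempty (↥(⋃ k, D k) ≃o Lex (ℕ × ℕᵒᵈ)) := by
  classical
  have e : ∀ k, ℕᵒᵈ ≃o ↥(D k) := fun k => (hiso k).some.symm
  let g : Lex (ℕ × ℕᵒᵈ) → ↥(⋃ k, D k) := fun p =>
    ⟨(e (ofLex p).1 (ofLex p).2 : L), Set.mem_iUnion.2 ⟨_, (e (ofLex p).1 (ofLex p).2).2⟩⟩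
  have hg : StrictMono g := by
    intro p q hpq
    have := Prod.Lex.lt_iff.1 hpq
    rcases this with h | ⟨h1, h2⟩
    · exact hasc _ _ h _ (e _ (ofLex q).2).2 _ (e _ (ofLex p).2).2
    · show (g p : L) < (g q : L)
      simp only [g]
      rw [h1]
      exact Subtype.coe_lt_coe.2 ((e (ofLex q).1).strictMono h2)
  have hsurj : Function.Surjective g := by
    rintro ⟨x, hx⟩
    obtain ⟨k, hk⟩ := Set.mem_iUnion.1 hx
    refine ⟨toLex (k, (e k).symm ⟨x, hk⟩), ?_⟩
    apply Subtype.ext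
    show ((e k) ((e k).symm ⟨x, hk⟩) : L) = x
    rw [OrderIso.apply_symm_apply]
  exact ⟨(StrictMono.orderIsoOfSurjective g hg hsurj).symm⟩

-- ### construction of a dense suborder when all classes in a region are finite

/-- The "density witness" predicate used for the big case distinction. -/
def DenseSub (B : Set L) : Prop :=
  B.Nonempty ∧ (∀ a ∈ B, ∃ b ∈ B, b < a) ∧ (∀ a ∈ B, ∃ b ∈ B, a < b) ∧
    (∀ a ∈ B, ∀ b ∈ B, a < b → ∃ c ∈ B, a < c ∧ c < b)

lemma exists_denseSub [Countable L] {R : Set L}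
    (hconv : ∀ ⦃a b z : L⦄, a ∈ R → b ∈ R → a < z → z < b → z ∈ R)
    (hcls : ∀ x ∈ R, cls x ⊆ R)
    (hfin : ∀ x ∈ R, (cls x).Finite)
    (hinf : R.Infinite) :
    ∃ B : Set L, DenseSub B := by
  classical
  obtain ⟨f, hf⟩ := Countable.exists_injective_nat L
  haveI : Nonempty L := ⟨hinf.nonempty.choose⟩
  set F : Set L → L := fun s => Classical.epsilon (fun b => b ∈ s ∧ ∀ c ∈ s, f b ≤ f c) with hF
  have hFspec : ∀ x : L, x ∈ R → F (cls x) ∈ cls x ∧ ∀ c ∈ cls x, f (F (cls x)) ≤ f c := by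
    intro x hx
    have hex : ∃ b, b ∈ cls x ∧ ∀ c ∈ cls x, f b ≤ f c := by
      obtain ⟨b, hb, hb'⟩ := Set.exists_min_image (cls x) f (hfin x hx) ⟨x, mem_cls_self x⟩
      exact ⟨b, hb, hb'⟩
    exact Classical.epsilon_spec hex
  set A : Set L := {x | x ∈ R ∧ F (cls x) = x} with hA
  have hrepA : ∀ x ∈ R, F (cls x) ∈ A := by
    intro x hx
    have h1 := (hFspec x hx).1
    have hmem : F (cls x) ∈ R := hcls x hx h1
    have : cls (F (cls x)) = cls x := (cls_eq (h1 : sim x _)).symm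
    exact ⟨hmem, by rw [this]⟩
  have hAR : A ⊆ R := fun x hx => hx.1
  -- A is infinite
  have hAinf : A.Infinite := by
    intro hAfin
    apply hinf
    have : R ⊆ ⋃ x ∈ A, cls x := by
      intro y hy
      exact Set.mem_biUnion (hrepA y hy) (sim_symm (hFspec y hy).1)
    exact Set.Finite.subset (Set.Finite.biUnion hAfin (fun x hx => hfin x (hAR hx))) this
  -- A is dense in itself
  have hAdense : ∀ a ∈ A, ∀ b ∈ A, a < b → ∃ c ∈ A, a < c ∧ c < b := by
    rintro a ⟨haR, haF⟩ b ⟨hbR, hbF⟩ hab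
    have hnotsim : ¬ sim a b := by
      intro hsim
      have : a = b := by rw [← haF, ← hbF, cls_eq hsim]
      exact absurd this (ne_of_lt hab)
    have hz : ∃ z, a < z ∧ z < b ∧ ¬ sim a z ∧ ¬ sim b z := by
      by_contra hcon
      push_neg at hcon
      have hsub : Set.Ioo a b ⊆ cls a ∪ cls b := by
        intro z hz
        rcases Classical.em (sim a z) with h | h
        · exact Or.inl h
        · exact Or.inr (hcon z hz.1 hz.2 h)
      have hIoo : (Set.Ioo a b).Finite :=
        Set.Finite.subset ((hfin a haR).union (hfin b hbR)) hsub
      exact hnotsim (sim_of_le hab.le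
        (((hIoo.insert b).insert a).subset Icc_subset_insert_Ioo))
    obtain ⟨z, haz, hzb, hnaz, hnbz⟩ := hz
    have hzR : z ∈ R := hconv haR hbR haz hzb
    set c := F (cls z) with hc
    have hcA : c ∈ A := hrepA z hzR
    have hcz : sim z c := (hFspec z hzR).1
    have hac : a < c := by
      by_contra hle
      push_neg at hle
      have h1 : sim c a := sim_of_between (sim_symm hcz) hle haz.le
      have h2 : sim z a := sim_trans hcz h1
      exact hnaz (sim_symm h2)
    have hcb : c < b := by
      by_contra hle
      push_neg at hle
      exact hnbz (sim_symm (sim_of_between hcz hzb.le hle))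
    exact ⟨c, hcA, hac, hcb⟩
  -- strip the (possible) endpoints of A
  set B : Set L := {x | x ∈ A ∧ (∃ u ∈ A, u < x) ∧ ∃ u ∈ A, x < u} with hB
  have hBA : B ⊆ A := fun x hx => hx.1
  have hBne : B.Nonempty := by
    obtain ⟨a, ha⟩ := hAinf.nonempty
    obtain ⟨b, hb⟩ := (hAinf.diff (Set.finite_singleton a)).nonempty
    have hne : b ≠ a := by simpa using hb.2
    rcases lt_or_gt_of_ne hne with h | h
    · obtain ⟨c, hcA, h1, h2⟩ := hAdense b hb.1 a ha h
      exact ⟨c, hcA, ⟨b, hb.1, h1⟩, ⟨a, ha, h2⟩⟩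
    · obtain ⟨c, hcA, h1, h2⟩ := hAdense a ha b hb.1 h
      exact ⟨c, hcA, ⟨a, ha, h1⟩, ⟨b, hb.1, h2⟩⟩
  refine ⟨B, hBne, ?_, ?_, ?_⟩
  · rintro a ⟨haA, ⟨u, huA, hu⟩, -⟩
    obtain ⟨c, hcA, h1, h2⟩ := hAdense u huA a haA hu
    exact ⟨c, ⟨hcA, ⟨u, huA, h1⟩, ⟨a, haA, h2⟩⟩, h2⟩
  · rintro a ⟨haA, -, ⟨u, huA, hu⟩⟩
    obtain ⟨c, hcA, h1, h2⟩ := hAdense a haA u huA hu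
    exact ⟨c, ⟨hcA, ⟨a, haA, h1⟩, ⟨u, huA, h2⟩⟩, h1⟩
  · rintro a ⟨haA, -, -⟩ b ⟨hbA, -, -⟩ hab
    obtain ⟨c, hcA, h1, h2⟩ := hAdense a haA b hbA hab
    exact ⟨c, ⟨hcA, ⟨a, haA, h1⟩, ⟨b, hbA, h2⟩⟩, h1, h2⟩

-- ### regions with optional endpoints

def Reg (M : WithBot L) (m : WithTop L) : Set L :=
  {y | M < (y : WithBot L) ∧ ((y : WithTop L)) < m}

def GoodB (M : WithBot L) : Prop := M = ⊥ ∨ ∃ a : L, M = ↑a ∧ IsWStar a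

def GoodT (m : WithTop L) : Prop := m = ⊤ ∨ ∃ b : L, m = ↑b ∧ IsW b

lemma Reg_mono {M M' : WithBot L} {m m' : WithTop L} (h1 : M ≤ M') (h2 : m' ≤ m) :
    Reg M' m' ⊆ Reg M m := fun _ hy => ⟨lt_of_le_of_lt h1 hy.1, lt_of_lt_of_le hy.2 h2⟩

lemma reg_no_max {M : WithBot L} {b : L} (hb : IsW b) :
    ∀ y ∈ Reg M (↑b : WithTop L), ∃ z ∈ Reg M (↑b : WithTop L), y < z := by
  intro y hy
  have hyb : y < b := WithTop.coe_lt_coe.1 hy.2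
  have : (Set.Ioo y b).Nonempty := by
    by_contra hc
    exact absurd (hb.2 y (sim_symm (sim_of_Ioo_empty hyb.le hc))) (not_le.2 hyb)
  obtain ⟨z, hz⟩ := this
  exact ⟨z, ⟨lt_trans hy.1 (WithBot.coe_lt_coe.2 hz.1), WithTop.coe_lt_coe.2 hz.2⟩, hz.1⟩

lemma reg_no_min {m : WithTop L} {a : L} (ha : IsWStar a) :
    ∀ y ∈ Reg (↑a : WithBot L) m, ∃ z ∈ Reg (↑a : WithBot L) m, z < y := by
  intro y hy
  have hay : a < y := WithBot.coe_lt_coe.1 hy.1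
  have : (Set.Ioo a y).Nonempty := by
    by_contra hc
    exact absurd (ha.2 y (sim_of_Ioo_empty hay.le hc)) (not_le.2 hay)
  obtain ⟨z, hz⟩ := this
  exact ⟨z, ⟨WithBot.coe_lt_coe.2 hz.1, lt_trans (WithTop.coe_lt_coe.2 hz.2) hy.2⟩, hz.2⟩

lemma reg_infinite [Infinite L] {M : WithBot L} {m : WithTop L}
    (hM : GoodB M) (hm : GoodT m) (hne : (Reg M m).Nonempty) : (Reg M m).Infinite := by
  rcases hm with rfl | ⟨b, rfl, hb⟩
  · rcases hM with rfl | ⟨a, rfl, ha⟩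
    · have : Reg (⊥ : WithBot L) (⊤ : WithTop L) = Set.univ := by
        ext y
        simp [Reg, WithBot.bot_lt_coe, WithTop.coe_lt_top]
      rw [this]
      exact Set.infinite_univ
    · exact infinite_of_no_min hne (reg_no_min ha)
  · exact infinite_of_no_max hne (reg_no_max hb)

lemma reg_clsClosed {M : WithBot L} {m : WithTop L}
    (hM : GoodB M) (hm : GoodT m) : ∀ x ∈ Reg M m, cls x ⊆ Reg M m := by
  intro x hx w hw
  constructor
  · rcases hM with rfl | ⟨a, rfl, ha⟩
    · exact WithBot.bot_lt_coe w
    · have hax : a < x := WithBot.coe_lt_coe.1 hx.1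
      rcases lt_trichotomy a w with h | rfl | h
      · exact WithBot.coe_lt_coe.2 h
      · exact absurd (ha.2 x (sim_symm hw)) (not_le.2 hax)
      · have : a ∈ cls x := Ioo_subset_cls hw (mem_cls_self x) ⟨h, hax⟩
        exact absurd (ha.2 x (sim_symm (this : sim x a))) (not_le.2 hax)
  · rcases hm with rfl | ⟨b, rfl, hb⟩
    · exact WithTop.coe_lt_top w
    · have hxb : x < b := WithTop.coe_lt_coe.1 hx.2
      rcases lt_trichotomy w b with h | rfl | h
      · exact WithTop.coe_lt_coe.2 h
      · exact absurd (hb.2 x (sim_symm hw)) (not_le.2 hxb)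
      · have : b ∈ cls x := Ioo_subset_cls (mem_cls_self x) hw ⟨hxb, h⟩
        exact absurd (hb.2 x (sim_symm (this : sim x b))) (not_le.2 hxb)

lemma reg_convex {M : WithBot L} {m : WithTop L} :
    ∀ ⦃a b z : L⦄, a ∈ Reg M m → b ∈ Reg M m → a < z → z < b → z ∈ Reg M m :=
  fun a b z ha hb h1 h2 =>
    ⟨lt_trans ha.1 (WithBot.coe_lt_coe.2 h1), lt_trans (WithTop.coe_lt_coe.2 h2) hb.2⟩

lemma exists_infinite_cls_in [Countable L] {R : Set L}
    (hnd : ¬ ∃ B : Set L, DenseSub B)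
    (hconv : ∀ ⦃a b z : L⦄, a ∈ R → b ∈ R → a < z → z < b → z ∈ R)
    (hcls : ∀ x ∈ R, cls x ⊆ R)
    (hinf : R.Infinite) : ∃ x ∈ R, (cls x).Infinite := by
  by_contra h
  push_neg at h
  exact hnd (exists_denseSub hconv hcls (fun x hx => h x hx) hinf)

lemma keyStep [Countable L] [Infinite L] (hnd : ¬ ∃ B : Set L, DenseSub B)
    (h2 : ∀ x : L, (cls x).Infinite →
      (∃ m, cls m = cls x ∧ IsW m) ∨ (∃ M, cls M = cls x ∧ IsWStar M))
    (h3 : ∀ x : L, IsW x → ∃ y, y < x)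
    (h4 : ∀ x : L, IsWStar x → ∃ y, x < y)
    {M : WithBot L} {m : WithTop L} (hM : GoodB M) (hm : GoodT m) (hne : (Reg M m).Nonempty) :
    ∃ (M' : WithBot L) (m' : WithTop L), GoodB M' ∧ GoodT m' ∧ M ≤ M' ∧ m' ≤ m ∧
      (Reg M' m').Nonempty ∧
      ((∃ b : L, m' = ↑b ∧ b ∈ Reg M m ∧ M' = M) ∨
       (∃ a : L, M' = ↑a ∧ a ∈ Reg M m ∧ m' = m)) := by
  obtain ⟨x, hxR, hxinf⟩ := exists_infinite_cls_in hnd reg_convex (reg_clsClosed hM hm)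
    (reg_infinite hM hm hne)
  rcases h2 x hxinf with ⟨m₀, hcls0, hW⟩ | ⟨M₀, hcls0, hWS⟩
  · have hm₀R : m₀ ∈ Reg M m := reg_clsClosed hM hm x hxR (by rw [← hcls0]; exact mem_cls_self m₀)
    refine ⟨M, ↑m₀, hM, Or.inr ⟨m₀, rfl, hW⟩, le_rfl, le_of_lt hm₀R.2, ?_, Or.inl ⟨m₀, rfl, hm₀R, rfl⟩⟩
    rcases hM with rfl | ⟨a, rfl, ha⟩
    · obtain ⟨p, hp⟩ := h3 m₀ hW
      exact ⟨p, WithBot.bot_lt_coe p, WithTop.coe_lt_coe.2 hp⟩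
    · have ham : a < m₀ := WithBot.coe_lt_coe.1 hm₀R.1
      have : (Set.Ioo a m₀).Nonempty := by
        by_contra hc
        exact absurd (hW.2 a (sim_symm (sim_of_Ioo_empty ham.le hc))) (not_le.2 ham)
      obtain ⟨z, hz⟩ := this
      exact ⟨z, WithBot.coe_lt_coe.2 hz.1, WithTop.coe_lt_coe.2 hz.2⟩
  · have hM₀R : M₀ ∈ Reg M m := reg_clsClosed hM hm x hxR (by rw [← hcls0]; exact mem_cls_self M₀)
    refine ⟨↑M₀, m, Or.inr ⟨M₀, rfl, hWS⟩, hm, le_of_lt hM₀R.1, le_rfl, ?_,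
      Or.inr ⟨M₀, rfl, hM₀R, rfl⟩⟩
    rcases hm with rfl | ⟨b, rfl, hb⟩
    · obtain ⟨p, hp⟩ := h4 M₀ hWS
      exact ⟨p, WithBot.coe_lt_coe.2 hp, WithTop.coe_lt_top p⟩
    · have hMb : M₀ < b := WithTop.coe_lt_coe.1 hM₀R.2
      have : (Set.Ioo M₀ b).Nonempty := by
        by_contra hc
        exact absurd (hb.2 M₀ (sim_symm (sim_of_Ioo_empty hMb.le hc))) (not_le.2 hMb)
      obtain ⟨z, hz⟩ := this
      exact ⟨z, WithBot.coe_lt_coe.2 hz.1, WithTop.coe_lt_coe.2 hz.2⟩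
  
end Sigma1Like

open Sigma1Like in
/-- Every infinite countable linear order `L` has an infinite suborder `A` such that
for all `a, b ∈ A`: `a` has a predecessor (resp. successor) in `A` iff it has one in `L`,
and `(a,b)` is nonempty in `A` iff it is nonempty in `L`; moreover `A` is
order-isomorphic to one of ℕ, ω*, ℤ, ω·ω*, ω*·ω, or ℚ. -/
theorem exists_sigma1_like_suborder (L : Type*) [LinearOrder L] [Countable L] [Infinite L] :
    ∃ A : Set L, A.Infinite ∧
      (∀ a ∈ A, ((∃ y ∈ A, y < a) ↔ ∃ y : L, y < a)) ∧
      (∀ a ∈ A, ((∃ y ∈ A, a < y) ↔ ∃ y : L, a < y)) ∧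
      (∀ a ∈ A, ∀ b ∈ A, ((∃ y ∈ A, a < y ∧ y < b) ↔ ∃ y : L, a < y ∧ y < b)) ∧
      (Nonempty (↥A ≃o ℕ) ∨ Nonempty (↥A ≃o ℕᵒᵈ) ∨ Nonempty (↥A ≃o ℤ) ∨
       Nonempty (↥A ≃o Lex (ℕᵒᵈ × ℕ)) ∨ Nonempty (↥A ≃o Lex (ℕ × ℕᵒᵈ)) ∨
       Nonempty (↥A ≃o ℚ)) := by
  classical
  -- Case 1 : there is a densely ordered suborder without endpoints
  by_cases h1 : ∃ B : Set L, DenseSub B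
  · obtain ⟨B, hne, hmi, hma, hde⟩ := h1
    refine ⟨B, infinite_of_no_max hne hma, ?_, ?_, ?_, ?_⟩
    · intro a ha
      exact ⟨fun ⟨y, _, hy⟩ => ⟨y, hy⟩, fun _ => hmi a ha⟩
    · intro a ha
      exact ⟨fun ⟨y, _, hy⟩ => ⟨y, hy⟩, fun _ => hma a ha⟩
    · intro a ha b hb
      refine ⟨fun ⟨y, _, hy⟩ => ⟨y, hy⟩, fun ⟨y, hy1, hy2⟩ => ?_⟩
      exact hde a ha b hb (lt_trans hy1 hy2)
    · right; right; right; right; right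
      haveI : Nonempty ↥B := hne.to_subtype
      haveI : DenselyOrdered ↥B := ⟨by
        rintro ⟨a, ha⟩ ⟨b, hb⟩ hab
        obtain ⟨c, hc, h1, h2⟩ := hde a ha b hb (Subtype.coe_lt_coe.2 hab)
        exact ⟨⟨c, hc⟩, Subtype.coe_lt_coe.1 h1, Subtype.coe_lt_coe.1 h2⟩⟩
      haveI : NoMinOrder ↥B := ⟨by
        rintro ⟨a, ha⟩
        obtain ⟨c, hc, h1⟩ := hmi a ha
        exact ⟨⟨c, hc⟩, Subtype.coe_lt_coe.1 h1⟩⟩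
      haveI : NoMaxOrder ↥B := ⟨by
        rintro ⟨a, ha⟩
        obtain ⟨c, hc, h1⟩ := hma a ha
        exact ⟨⟨c, hc⟩, Subtype.coe_lt_coe.1 h1⟩⟩
      exact Order.iso_of_countable_dense ↥B ℚ
  -- Case 2 : some condensation class is a ℤ-chain
  by_cases h2 : ∃ x : L, (cls x).Infinite ∧ (∀ a ∈ cls x, ∃ b ∈ cls x, b < a) ∧
      (∀ a ∈ cls x, ∃ b ∈ cls x, a < b)
  · obtain ⟨x, hinf, hmi, hma⟩ := h2
    refine ⟨cls x, hinf, ?_, ?_, ?_, ?_⟩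
    · intro a ha
      exact ⟨fun ⟨y, _, hy⟩ => ⟨y, hy⟩, fun _ => hmi a ha⟩
    · intro a ha
      exact ⟨fun ⟨y, _, hy⟩ => ⟨y, hy⟩, fun _ => hma a ha⟩
    · intro a ha b hb
      refine ⟨fun ⟨y, _, hy⟩ => ⟨y, hy⟩, fun ⟨y, hy1, hy2⟩ => ?_⟩
      exact ⟨y, Ioo_subset_cls ha hb ⟨hy1, hy2⟩, hy1, hy2⟩
    · right; right; left
      exact cls_iso_int hinf hmi hma
  -- Case 3 : some ω-class whose minimum is the minimum of L
  by_cases h3 : ∃ x : L, IsW x ∧ ∀ y : L, ¬ y < x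
  · obtain ⟨x, hx, hmin⟩ := h3
    refine ⟨cls x, hx.1, ?_, ?_, ?_, ?_⟩
    · intro a ha
      constructor
      · rintro ⟨y, _, hy⟩; exact ⟨y, hy⟩
      · rintro ⟨y, hy⟩
        rcases eq_or_lt_of_le (hx.2 a ha) with rfl | h
        · exact absurd hy (hmin y)
        · exact ⟨x, mem_cls_self x, h⟩
    · intro a ha
      refine ⟨fun ⟨y, _, hy⟩ => ⟨y, hy⟩, fun _ => ?_⟩
      obtain ⟨b, hb, hab⟩ := hx.no_max a ha
      exact ⟨b, hb, hab⟩
    · intro a ha b hb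
      refine ⟨fun ⟨y, _, hy⟩ => ⟨y, hy⟩, fun ⟨y, hy1, hy2⟩ => ?_⟩
      exact ⟨y, Ioo_subset_cls ha hb ⟨hy1, hy2⟩, hy1, hy2⟩
    · left
      exact isW_iso_nat hx
  -- Case 4 : some ω*-class whose maximum is the maximum of L
  by_cases h4 : ∃ x : L, IsWStar x ∧ ∀ y : L, ¬ x < y
  · obtain ⟨x, hx, hmax⟩ := h4
    refine ⟨cls x, hx.1, ?_, ?_, ?_, ?_⟩
    · intro a ha
      refine ⟨fun ⟨y, _, hy⟩ => ⟨y, hy⟩, fun _ => ?_⟩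
      obtain ⟨b, hb, hab⟩ := hx.no_min a ha
      exact ⟨b, hb, hab⟩
    · intro a ha
      constructor
      · rintro ⟨y, _, hy⟩; exact ⟨y, hy⟩
      · rintro ⟨y, hy⟩
        rcases eq_or_lt_of_le (hx.2 a ha) with h | h
        · subst h; exact absurd hy (hmax y)
        · exact ⟨x, mem_cls_self x, h⟩
    · intro a ha b hb
      refine ⟨fun ⟨y, _, hy⟩ => ⟨y, hy⟩, fun ⟨y, hy1, hy2⟩ => ?_⟩
      exact ⟨y, Ioo_subset_cls ha hb ⟨hy1, hy2⟩, hy1, hy2⟩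
    · right; left
      exact isWStar_iso_natOD hx
  -- Main case : build ω·ω* or ω*·ω
  -- derived facts
  have fact2 : ∀ x : L, (cls x).Infinite →
      (∃ m, cls m = cls x ∧ IsW m) ∨ (∃ M, cls M = cls x ∧ IsWStar M) := by
    intro x hinf
    by_cases hmin : ∃ m ∈ cls x, ∀ y ∈ cls x, m ≤ y
    · obtain ⟨m, hm, hle⟩ := hmin
      have hc : cls m = cls x := (cls_eq hm).symm
      exact Or.inl ⟨m, hc, ⟨by rw [hc]; exact hinf, by rw [hc]; exact hle⟩⟩
    · by_cases hmax : ∃ M ∈ cls x, ∀ y ∈ cls x, y ≤ M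
      · obtain ⟨M, hM, hle⟩ := hmax
        have hc : cls M = cls x := (cls_eq hM).symm
        exact Or.inr ⟨M, hc, ⟨by rw [hc]; exact hinf, by rw [hc]; exact hle⟩⟩
      · exfalso
        push_neg at hmin hmax
        exact h2 ⟨x, hinf, fun a ha => hmin a ha, fun a ha => hmax a ha⟩
  have fact3 : ∀ x : L, IsW x → ∃ y : L, y < x := by
    intro x hx
    by_contra h
    push_neg at h
    exact h3 ⟨x, hx, fun y => not_lt.2 (h y)⟩
  have fact4 : ∀ x : L, IsWStar x → ∃ y : L, x < y := by
    intro x hx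
    by_contra h
    push_neg at h
    exact h4 ⟨x, hx, fun y => not_lt.2 (h y)⟩
  -- the iterated shrinking of regions
  let St := {p : WithBot L × WithTop L //
    GoodB p.1 ∧ GoodT p.2 ∧ (Reg p.1 p.2).Nonempty}
  have hstep : ∀ p : St, ∃ q : St,
      p.1.1 ≤ q.1.1 ∧ q.1.2 ≤ p.1.2 ∧
      ((∃ b : L, q.1.2 = ↑b ∧ b ∈ Reg p.1.1 p.1.2 ∧ q.1.1 = p.1.1) ∨
       (∃ a : L, q.1.1 = ↑a ∧ a ∈ Reg p.1.1 p.1.2 ∧ q.1.2 = p.1.2)) := by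
    rintro ⟨⟨M, m⟩, hM, hm, hne⟩
    obtain ⟨M', m', hM', hm', hle1, hle2, hne', hcase⟩ :=
      keyStep h1 fact2 fact3 fact4 hM hm hne
    exact ⟨⟨(M', m'), hM', hm', hne'⟩, hle1, hle2, hcase⟩
  choose next hnext1 hnext2 hnext3 using hstep
  have hbase : GoodB (⊥ : WithBot L) ∧ GoodT (⊤ : WithTop L) ∧
      (Reg (⊥ : WithBot L) (⊤ : WithTop L)).Nonempty :=
    ⟨Or.inl rfl, Or.inl rfl,
      ⟨Classical.arbitrary L, WithBot.bot_lt_coe _, WithTop.coe_lt_top _⟩⟩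
  let seq : ℕ → St := fun n => Nat.rec ⟨(⊥, ⊤), hbase⟩ (fun _ ih => next ih) n
  set Mo : ℕ → WithBot L := fun n => (seq n).1.1 with hMo
  set mo : ℕ → WithTop L := fun n => (seq n).1.2 with hmo
  have hGB : ∀ n, GoodB (Mo n) := fun n => (seq n).2.1
  have hGT : ∀ n, GoodT (mo n) := fun n => (seq n).2.2.1
  have hMole : ∀ k l, k ≤ l → Mo k ≤ Mo l := by
    intro k l h
    induction l, h using Nat.le_induction with
    | base => exact le_rfl
    | succ n hn ih => exact le_trans ih (hnext1 (seq n))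
  have hmole : ∀ k l, k ≤ l → mo l ≤ mo k := by
    intro k l h
    induction l, h using Nat.le_induction with
    | base => exact le_rfl
    | succ n hn ih => exact le_trans (hnext2 (seq n)) ih
  have hRegSub : ∀ k l, k ≤ l → Reg (Mo l) (mo l) ⊆ Reg (Mo k) (mo k) :=
    fun k l h => Reg_mono (hMole k l h) (hmole k l h)
  set P : Set ℕ := {n | ∃ b : L, mo (n+1) = ↑b ∧ b ∈ Reg (Mo n) (mo n) ∧ Mo (n+1) = Mo n}
    with hP
  set Q : Set ℕ := {n | ∃ a : L, Mo (n+1) = ↑a ∧ a ∈ Reg (Mo n) (mo n) ∧ mo (n+1) = mo n}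
    with hQ
  have hPQ : ∀ n, n ∈ P ∨ n ∈ Q := fun n => hnext3 (seq n)
  by_cases hPinf : P.Infinite
  · -- infinitely many ω-classes, descending : type ω·ω*
    haveI := hPinf.to_subtype
    let σ : ℕ → ℕ := fun k => ((Nat.Subtype.orderIsoOfNat P) k : ℕ)
    have hσmem : ∀ k, σ k ∈ P := fun k => ((Nat.Subtype.orderIsoOfNat P) k).2
    have hσmono : StrictMono σ := fun k l h =>
      Subtype.coe_lt_coe.2 ((Nat.Subtype.orderIsoOfNat P).strictMono h)
    let b : ℕ → L := fun k => (hσmem k).choose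
    have hb1 : ∀ k, mo (σ k + 1) = ↑(b k) := fun k => (hσmem k).choose_spec.1
    have hb2 : ∀ k, b k ∈ Reg (Mo (σ k)) (mo (σ k)) := fun k => (hσmem k).choose_spec.2.1
    have hWb : ∀ k, IsW (b k) := by
      intro k
      rcases hGT (σ k + 1) with h | ⟨b', hb', hW⟩
      · rw [hb1 k] at h; exact absurd h (WithTop.coe_ne_top)
      · rw [hb1 k] at hb'
        rwa [WithTop.coe_injective hb'.symm] at hW
    set D : ℕ → Set L := fun k => cls (b k) with hD
    have hdesc : ∀ k l, k < l → ∀ x ∈ D l, ∀ y ∈ D k, x < y := by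
      intro k l hkl x hx y hy
      have hx' : x ∈ Reg (Mo (σ l)) (mo (σ l)) :=
        reg_clsClosed (hGB (σ l)) (hGT (σ l)) (b l) (hb2 l) hx
      have hx'' : x ∈ Reg (Mo (σ k + 1)) (mo (σ k + 1)) :=
        hRegSub _ _ (Nat.succ_le_of_lt (hσmono hkl)) hx'
      have hxb : x < b k := by
        have := hx''.2
        rw [hb1 k] at this
        exact WithTop.coe_lt_coe.1 this
      exact lt_of_lt_of_le hxb ((hWb k).2 y hy)
    refine ⟨⋃ k, D k, ((hWb 0).1).mono (Set.subset_iUnion D 0), ?_, ?_, ?_, ?_⟩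
    · intro a ha
      obtain ⟨k, hk⟩ := Set.mem_iUnion.1 ha
      refine ⟨fun ⟨y, _, hy⟩ => ⟨y, hy⟩, fun _ => ?_⟩
      refine ⟨b (k+1), Set.mem_iUnion.2 ⟨k+1, mem_cls_self _⟩, ?_⟩
      exact hdesc k (k+1) (Nat.lt_succ_self k) (b (k+1)) (mem_cls_self _) a hk
    · intro a ha
      obtain ⟨k, hk⟩ := Set.mem_iUnion.1 ha
      refine ⟨fun ⟨y, _, hy⟩ => ⟨y, hy⟩, fun _ => ?_⟩
      obtain ⟨y, hy, hay⟩ := (hWb k).no_max a hk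
      exact ⟨y, Set.mem_iUnion.2 ⟨k, hy⟩, hay⟩
    · intro a ha c hc
      obtain ⟨i, hi⟩ := Set.mem_iUnion.1 ha
      obtain ⟨j, hj⟩ := Set.mem_iUnion.1 hc
      refine ⟨fun ⟨y, _, hy⟩ => ⟨y, hy⟩, fun ⟨y, hy1, hy2⟩ => ?_⟩
      rcases lt_trichotomy i j with h | rfl | h
      · exact absurd (hdesc i j h c hj a hi) (not_lt.2 (le_of_lt (lt_trans hy1 hy2)))
      · exact ⟨y, Set.mem_iUnion.2 ⟨i, Ioo_subset_cls hi hj ⟨hy1, hy2⟩⟩, hy1, hy2⟩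
      · obtain ⟨a', ha', haa'⟩ := (hWb i).no_max a hi
        exact ⟨a', Set.mem_iUnion.2 ⟨i, ha'⟩, haa', hdesc j i h a' ha' c hj⟩
    · right; right; right; left
      exact iUnion_desc_iso (fun k => isW_iso_nat (hWb k)) hdesc
  · -- infinitely many ω*-classes, ascending : type ω*·ω
    have hPfin : P.Finite := Set.not_infinite.1 hPinf
    have hQinf : Q.Infinite :=
      (hPfin.infinite_compl).mono (fun n hn => (hPQ n).resolve_left hn)
    haveI := hQinf.to_subtype
    let σ : ℕ → ℕ := fun k => ((Nat.Subtype.orderIsoOfNat Q) k : ℕ)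
    have hσmem : ∀ k, σ k ∈ Q := fun k => ((Nat.Subtype.orderIsoOfNat Q) k).2
    have hσmono : StrictMono σ := fun k l h =>
      Subtype.coe_lt_coe.2 ((Nat.Subtype.orderIsoOfNat Q).strictMono h)
    let b : ℕ → L := fun k => (hσmem k).choose
    have hb1 : ∀ k, Mo (σ k + 1) = ↑(b k) := fun k => (hσmem k).choose_spec.1
    have hb2 : ∀ k, b k ∈ Reg (Mo (σ k)) (mo (σ k)) := fun k => (hσmem k).choose_spec.2.1
    have hWb : ∀ k, IsWStar (b k) := by
      intro k
      rcases hGB (σ k + 1) with h | ⟨b', hb', hW⟩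
      · rw [hb1 k] at h; exact absurd h (WithBot.coe_ne_bot)
      · rw [hb1 k] at hb'
        rwa [WithBot.coe_injective hb'.symm] at hW
    set D : ℕ → Set L := fun k => cls (b k) with hD
    have hasc : ∀ k l, k < l → ∀ x ∈ D l, ∀ y ∈ D k, y < x := by
      intro k l hkl x hx y hy
      have hx' : x ∈ Reg (Mo (σ l)) (mo (σ l)) :=
        reg_clsClosed (hGB (σ l)) (hGT (σ l)) (b l) (hb2 l) hx
      have hx'' : x ∈ Reg (Mo (σ k + 1)) (mo (σ k + 1)) :=
        hRegSub _ _ (Nat.succ_le_of_lt (hσmono hkl)) hx'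
      have hxb : b k < x := by
        have := hx''.1
        rw [hb1 k] at this
        exact WithBot.coe_lt_coe.1 this
      exact lt_of_le_of_lt ((hWb k).2 y hy) hxb
    refine ⟨⋃ k, D k, ((hWb 0).1).mono (Set.subset_iUnion D 0), ?_, ?_, ?_, ?_⟩
    · intro a ha
      obtain ⟨k, hk⟩ := Set.mem_iUnion.1 ha
      refine ⟨fun ⟨y, _, hy⟩ => ⟨y, hy⟩, fun _ => ?_⟩
      obtain ⟨y, hy, hay⟩ := (hWb k).no_min a hk
      exact ⟨y, Set.mem_iUnion.2 ⟨k, hy⟩, hay⟩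
    · intro a ha
      obtain ⟨k, hk⟩ := Set.mem_iUnion.1 ha
      refine ⟨fun ⟨y, _, hy⟩ => ⟨y, hy⟩, fun _ => ?_⟩
      refine ⟨b (k+1), Set.mem_iUnion.2 ⟨k+1, mem_cls_self _⟩, ?_⟩
      exact hasc k (k+1) (Nat.lt_succ_self k) (b (k+1)) (mem_cls_self _) a hk
    · intro a ha c hc
      obtain ⟨i, hi⟩ := Set.mem_iUnion.1 ha
      obtain ⟨j, hj⟩ := Set.mem_iUnion.1 hc
      refine ⟨fun ⟨y, _, hy⟩ => ⟨y, hy⟩, fun ⟨y, hy1, hy2⟩ => ?_⟩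
      rcases lt_trichotomy i j with h | rfl | h
      · obtain ⟨c', hc', hcc'⟩ := (hWb j).no_min c hj
        exact ⟨c', Set.mem_iUnion.2 ⟨j, hc'⟩, hasc i j h c' hc' a hi, hcc'⟩
      · exact ⟨y, Set.mem_iUnion.2 ⟨i, Ioo_subset_cls hi hj ⟨hy1, hy2⟩⟩, hy1, hy2⟩
      · exact absurd (hasc j i h a hi c hj) (not_lt.2 (le_of_lt (lt_trans hy1 hy2)))
    · right; right; right; right; left
      exact iUnion_asc_iso (fun k => isWStar_iso_natOD (hWb k)) hasc
end

section
/- If a linear order L contains an element whose 1-block is isomorphic to ℤ, then that 1-block B is a Σ₁-elementary suborder in the following concrete sense: for all a, b ∈ B, the intervals (-∞,b), (a,b), (a,∞) computed in B have the same cardinality as those computed in L. -/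
/-- If an element of a (countable) linear order `L` has 1-block isomorphic to ℤ, then
that block `B` is Σ₁-elementary in the concrete sense: for all `a, b ∈ B` the
intervals `(-∞,b)`, `(a,b)`, `(a,∞)` computed in `B` have the same cardinality as
those computed in `L`. -/
theorem zBlock_is_sigma1 (L : Type*) [LinearOrder L] [Countable L] (x : L)
    (hZ : Nonempty ({y : L // BlockRel x y} ≃o ℤ)) :
    ∀ a, BlockRel x a → ∀ b, BlockRel x b →
      Cardinal.mk ↥{z : L | BlockRel x z ∧ z < b} = Cardinal.mk ↥{z : L | z < b} ∧
      Cardinal.mk ↥{z : L | BlockRel x z ∧ a < z ∧ z < b} =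
        Cardinal.mk ↥{z : L | a < z ∧ z < b} ∧
      Cardinal.mk ↥{z : L | BlockRel x z ∧ a < z} = Cardinal.mk ↥{z : L | a < z} := by
  obtain ⟨e⟩ := hZ
  -- symmetry of BlockRel
  have hsymm : ∀ u v : L, BlockRel u v → BlockRel v u := by
    intro u v h
    exact h.subset (by intro z hz; rcases hz with h' | h'; exacts [Or.inr h', Or.inl h'])
  -- transitivity of BlockRel
  have htrans : ∀ u v w : L, BlockRel u v → BlockRel v w → BlockRel u w := by
    intro u v w h1 h2
    refine ((h1.union (h2.union (Set.finite_singleton v))).subset ?_)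
    intro z hz
    simp only [Set.mem_union, Set.mem_setOf_eq, Set.mem_singleton_iff]
    rcases hz with ⟨ha, hb⟩ | ⟨ha, hb⟩ <;> rcases lt_trichotomy z v with hv | hv | hv <;> tauto
  -- the middle intervals coincide as sets
  have hmid : ∀ a, BlockRel x a → ∀ b, BlockRel x b →
      {z : L | BlockRel x z ∧ a < z ∧ z < b} = {z : L | a < z ∧ z < b} := by
    intro a ha b hb
    ext z
    simp only [Set.mem_setOf_eq]
    constructor
    · rintro ⟨_, h⟩; exact h
    · rintro ⟨h1, h2⟩
      refine ⟨?_, h1, h2⟩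
      have hab : BlockRel a b := htrans _ _ _ (hsymm _ _ ha) hb
      have haz : BlockRel a z := by
        refine hab.subset ?_
        intro w hw
        rcases hw with ⟨hw1, hw2⟩ | ⟨hw1, hw2⟩
        · exact Or.inl ⟨hw1, hw2.trans h2⟩
        · exact absurd (hw1.trans hw2) (asymm h1)
      exact htrans _ _ _ ha haz
  -- the lower tails in the block are infinite
  have hbelow : ∀ b, (hb : BlockRel x b) → {z : L | BlockRel x z ∧ z < b}.Infinite := by
    intro b hb
    apply Set.infinite_of_injective_forall_mem
      (f := fun n : ℕ => ((e.symm (e ⟨b, hb⟩ - (n + 1)) : {y : L // BlockRel x y}) : L))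
    · intro m n h
      have h2 : e.symm (e ⟨b, hb⟩ - ((m : ℤ) + 1)) = e.symm (e ⟨b, hb⟩ - ((n : ℤ) + 1)) :=
        Subtype.coe_injective h
      have h3 := sub_right_injective (e.symm.injective h2)
      have h4 : (m : ℤ) = n := by omega
      exact_mod_cast h4
    · intro n
      refine ⟨(e.symm _).2, ?_⟩
      have : e.symm (e ⟨b, hb⟩ - ((n : ℤ) + 1)) < e.symm (e ⟨b, hb⟩) := by
        apply e.symm.lt_iff_lt.mpr
        have : (0 : ℤ) < (n : ℤ) + 1 := by positivity
        omega
      exact (by simpa using this : e.symm (e ⟨b, hb⟩ - ((n : ℤ) + 1)) < ⟨b, hb⟩)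
  have habove : ∀ a, (ha : BlockRel x a) → {z : L | BlockRel x z ∧ a < z}.Infinite := by
    intro a ha
    apply Set.infinite_of_injective_forall_mem
      (f := fun n : ℕ => ((e.symm (e ⟨a, ha⟩ + (n + 1)) : {y : L // BlockRel x y}) : L))
    · intro m n h
      have h2 : e.symm (e ⟨a, ha⟩ + ((m : ℤ) + 1)) = e.symm (e ⟨a, ha⟩ + ((n : ℤ) + 1)) :=
        Subtype.coe_injective h
      have h3 := add_left_cancel (e.symm.injective h2)
      have h4 : (m : ℤ) = n := by omega
      exact_mod_cast h4
    · intro n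
      refine ⟨(e.symm _).2, ?_⟩
      have : e.symm (e ⟨a, ha⟩) < e.symm (e ⟨a, ha⟩ + ((n : ℤ) + 1)) := by
        apply e.symm.lt_iff_lt.mpr
        have : (0 : ℤ) < (n : ℤ) + 1 := by positivity
        omega
      exact (by simpa using this : (⟨a, ha⟩ : {y : L // BlockRel x y}) < e.symm (e ⟨a, ha⟩ + ((n : ℤ) + 1)))
  -- any infinite subset of a countable type has cardinality ℵ₀
  have haleph : ∀ s : Set L, s.Infinite → Cardinal.mk s = Cardinal.aleph0 := by
    intro s hs
    have := hs.to_subtype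
    exact Cardinal.mk_eq_aleph0 s
  intro a ha b hb
  refine ⟨?_, ?_, ?_⟩
  · have h1 := hbelow b hb
    have h2 : {z : L | z < b}.Infinite := h1.mono (fun z hz => hz.2)
    rw [haleph _ h1, haleph _ h2]
  · rw [hmid a ha b hb]
  · have h1 := habove a ha
    have h2 : {z : L | a < z}.Infinite := h1.mono (fun z hz => hz.2)
    rw [haleph _ h1, haleph _ h2]
end

section
/- Every infinite structure in a finite relational language has an infinite substructure which is 'monochromatic' in the sense that the truth of each relation on a k-tuple from the substructure depends only on the order type / equality pattern of the tuple; consequently every infinite structure over a finite relational language has an infinite substructure isomorphic to a computable structure. -/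
/-- Infinite Ramsey theorem for `m`-subsets of an infinite subset of `ℕ`,
with colors in a finite type: colorings of strictly increasing `m`-tuples. -/
private theorem myRamsey : ∀ (m : ℕ) (κ : Type) [Finite κ] (c : (Fin m → ℕ) → κ)
    (S : Set ℕ), S.Infinite →
    ∃ T, T ⊆ S ∧ T.Infinite ∧ ∃ k, ∀ t : Fin m → ℕ, StrictMono t → (∀ j, t j ∈ T) → c t = k := by
  intro m
  induction m with
  | zero =>
    intro κ _ c S hS
    refine ⟨S, subset_rfl, hS, c (fun j => j.elim0), ?_⟩
    intro t _ _
    congr 1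
    funext j; exact j.elim0
  | succ m IH =>
    intro κ _ c S hS
    classical
    have step : ∀ S' : Set ℕ, S'.Infinite →
        ∃ T, (T ⊆ {y ∈ S' | sInf S' < y} ∧ T.Infinite) ∧ ∃ k, ∀ t : Fin m → ℕ,
          StrictMono t → (∀ j, t j ∈ T) → c (Fin.cons (sInf S') t) = k := by
      intro S' hS'
      have h1 : ({y ∈ S' | sInf S' < y}).Infinite := by
        have he : {y ∈ S' | sInf S' < y} = S' \ Set.Iic (sInf S') := by
          ext y; simp [Set.mem_Iic, not_le]
        rw [he]
        exact hS'.diff (Set.finite_Iic _)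
      obtain ⟨T, hT1, hT2, k, hk⟩ := IH κ (fun t => c (Fin.cons (sInf S') t)) _ h1
      exact ⟨T, ⟨hT1, hT2⟩, k, hk⟩
    let F : ℕ → {S : Set ℕ // S.Infinite} := fun n => Nat.rec ⟨S, hS⟩
      (fun _ p => ⟨(step p.1 p.2).choose, (step p.1 p.2).choose_spec.1.2⟩) n
    let x : ℕ → ℕ := fun n => sInf (F n).1
    have hsub : ∀ n, (F (n+1)).1 ⊆ {y ∈ (F n).1 | x n < y} := fun n =>
      (step (F n).1 (F n).2).choose_spec.1.1
    let col : ℕ → κ := fun n => (step (F n).1 (F n).2).choose_spec.2.choose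
    have hcol : ∀ n, ∀ t : Fin m → ℕ, StrictMono t → (∀ j, t j ∈ (F (n+1)).1) →
        c (Fin.cons (x n) t) = col n := fun n =>
      (step (F n).1 (F n).2).choose_spec.2.choose_spec
    have hx : ∀ n, x n ∈ (F n).1 := fun n => Nat.sInf_mem (F n).2.nonempty
    have hmono : ∀ n p, n ≤ p → (F p).1 ⊆ (F n).1 := by
      intro n p h
      induction h with
      | refl => exact subset_rfl
      | step h ih => exact fun y hy => ih ((hsub _ hy).1)
    have hxlt : ∀ n p, n < p → ∀ y ∈ (F p).1, x n < y := by
      intro n p h y hy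
      exact (hsub n (hmono (n+1) p h hy)).2
    have hxmono : StrictMono x := fun n p h => hxlt n p h (x p) (hx p)
    obtain ⟨k, hk⟩ := Finite.exists_infinite_fiber col
    have hI : (col ⁻¹' {k}).Infinite := Set.infinite_coe_iff.mp hk
    refine ⟨x '' (col ⁻¹' {k}), ?_, ?_, k, ?_⟩
    · rintro _ ⟨n, _, rfl⟩
      exact hmono 0 n (Nat.zero_le n) (hx n)
    · exact hI.image (Set.injOn_of_injective hxmono.injective)
    · intro t ht htT
      choose n hnI hxn using fun j => htT j
      have hnm : ∀ {j j' : Fin (m+1)}, j < j' → n j < n j' := by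
        intro j j' h
        have : x (n j) < x (n j') := by rw [hxn, hxn]; exact ht h
        exact hxmono.lt_iff_lt.mp this
      have htail : ∀ j : Fin m, Fin.tail t j ∈ (F (n 0 + 1)).1 := by
        intro j
        have h1 : n 0 < n j.succ := hnm (Fin.succ_pos j)
        have : t j.succ ∈ (F (n j.succ)).1 := (hxn j.succ) ▸ hx (n j.succ)
        exact hmono (n 0 + 1) (n j.succ) h1 this
      have hts : StrictMono (Fin.tail t) := fun j j' h =>
        ht (Fin.succ_lt_succ_iff.mpr h)
      have key : c t = col (n 0) := by
        have h0 : t = Fin.cons (x (n 0)) (Fin.tail t) := by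
          rw [hxn 0, Fin.cons_self_tail]
        rw [h0]
        exact hcol (n 0) (Fin.tail t) hts htail
      rw [key]
      exact hnI 0

private theorem card_filter_lt_of_strictMono {m : ℕ} {u : Fin m → ℕ} (hu : StrictMono u)
    (p : Fin m) : ((Finset.univ.image u).filter (· < u p)).card = p.val := by
  classical
  have h1 : (Finset.univ.image u).filter (· < u p)
      = (Finset.univ.filter (fun q : Fin m => q < p)).image u := by
    rw [Finset.filter_image]
    congr 1
    ext q
    simp [hu.lt_iff_lt]
  rw [h1, Finset.card_image_of_injective _ hu.injective]
  have h : (Finset.univ.filter (fun q : Fin m => q < p)) = Finset.Iio p := by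
    ext q; simp
  rw [h, Fin.card_Iio]

/-- Extend a tuple with values in an infinite set `T` to a strictly increasing `m`-tuple
in `T` such that each value `t j` sits at position `#{values of t below t j}`. -/
private theorem exists_strictMono_extension {m n : ℕ} (hn : n ≤ m) (T : Set ℕ)
    (hT : T.Infinite) (t : Fin n → ℕ) (htT : ∀ j, t j ∈ T) :
    ∃ u : Fin m → ℕ, StrictMono u ∧ (∀ p, u p ∈ T) ∧
      ∀ (j : Fin n) (p : Fin m),
        (p : ℕ) = (((Finset.univ.image t)).filter (· < t j)).card → u p = t j := by
  classical
  set A : Finset ℕ := Finset.univ.image t with hA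
  have hAT : ∀ y ∈ A, y ∈ T := by
    intro y hy
    obtain ⟨j, _, rfl⟩ := Finset.mem_image.mp hy
    exact htT j
  have hAcard : A.card ≤ m := le_trans (le_trans Finset.card_image_le (by simp)) hn
  set M : ℕ := A.sup id with hM
  have hIoi : (T ∩ Set.Ioi M).Infinite :=
    ((hT.diff (Set.finite_Iic M)).mono (by
      intro y hy
      exact ⟨hy.1, (lt_of_not_ge (fun h => hy.2 h) : M < y)⟩))
  obtain ⟨C, hCsub, hCcard⟩ := hIoi.exists_subset_card_eq (m - A.card)
  have hdisj : Disjoint A C := by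
    rw [Finset.disjoint_left]
    intro y hyA hyC
    have h1 : y ≤ M := Finset.le_sup (f := id) hyA
    have h2 : M < y := (hCsub hyC).2
    omega
  have hBcard : (A ∪ C).card = m := by
    rw [Finset.card_union_of_disjoint hdisj, hCcard]
    omega
  set B := A ∪ C with hB
  set u : Fin m → ℕ := fun p => ((B.orderIsoOfFin hBcard) p : ℕ) with hu
  have humono : StrictMono u := fun p q h =>
    (B.orderIsoOfFin hBcard).lt_iff_lt.mpr h
  have huB : ∀ p, u p ∈ B := fun p => ((B.orderIsoOfFin hBcard) p).2
  have himg : Finset.univ.image u = B := by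
    apply Finset.eq_of_subset_of_card_le
    · intro y hy
      obtain ⟨p, _, rfl⟩ := Finset.mem_image.mp hy
      exact huB p
    · rw [hBcard, Finset.card_image_of_injective _ humono.injective, Finset.card_univ,
        Fintype.card_fin]
  refine ⟨u, humono, ?_, ?_⟩
  · intro p
    rcases Finset.mem_union.mp (huB p) with h | h
    · exact hAT _ h
    · exact (hCsub h).1
  · intro j p hp
    have htjB : t j ∈ B := Finset.mem_union_left _ (Finset.mem_image_of_mem t (Finset.mem_univ j))
    set q : Fin m := (B.orderIsoOfFin hBcard).symm ⟨t j, htjB⟩ with hq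
    have huq : u q = t j := by
      have h0 := (B.orderIsoOfFin hBcard).apply_symm_apply ⟨t j, htjB⟩
      exact congrArg Subtype.val h0
    have hBfilter : B.filter (· < t j) = A.filter (· < t j) := by
      rw [hB, Finset.filter_union]
      have : C.filter (· < t j) = ∅ := by
        rw [Finset.filter_eq_empty_iff]
        intro y hy
        have h1 : t j ≤ M := Finset.le_sup (f := id) (Finset.mem_image_of_mem t (Finset.mem_univ j))
        have h2 : M < y := (hCsub hy).2
        omega
      rw [this, Finset.union_empty]
    have hcard : (q : ℕ) = (A.filter (· < t j)).card := by
      have := card_filter_lt_of_strictMono humono q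
      rw [himg, huq, hBfilter] at this
      omega
    have hpq : p = q := Fin.ext (by rw [hp, hcard])
    rw [hpq, huq]

private theorem card_image_eq_of_pattern {n : ℕ} (t s : Fin n → ℕ)
    (hpat : ∀ j j', t j = t j' ↔ s j = s j') (J : Finset (Fin n)) :
    (J.image t).card = (J.image s).card := by
  classical
  refine Finset.card_bij (fun v hv => s (Finset.mem_image.mp hv).choose) ?_ ?_ ?_
  · intro v hv
    exact Finset.mem_image.mpr ⟨_, (Finset.mem_image.mp hv).choose_spec.1, rfl⟩
  · intro v1 hv1 v2 hv2 h
    have h1 := (Finset.mem_image.mp hv1).choose_spec.2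
    have h2 := (Finset.mem_image.mp hv2).choose_spec.2
    rw [← h1, ← h2]
    exact (hpat _ _).mpr h
  · intro w hw
    obtain ⟨j, hj, rfl⟩ := Finset.mem_image.mp hw
    have hv : t j ∈ J.image t := Finset.mem_image_of_mem t hj
    refine ⟨t j, hv, ?_⟩
    exact (hpat _ _).mp (Finset.mem_image.mp hv).choose_spec.2

/-- Every infinite structure in a finite relational language (here: a structure with
domain ℕ and relations `R i` of arity `a i`, `i < N`) has an infinite substructure `T`
that is monochromatic — the truth of each relation on a tuple from `T` depends only on
the equality/order pattern of the tuple — and consequently `T`, as a substructure, is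
isomorphic to a computable structure (relations decided by computable Boolean
functions on codes of tuples). -/
theorem exists_monochromatic_computable_substructure
    (N : ℕ) (a : Fin N → ℕ) (R : ∀ i : Fin N, (Fin (a i) → ℕ) → Prop) :
    ∃ T : Set ℕ, T.Infinite ∧
      (∀ (i : Fin N) (t s : Fin (a i) → ℕ),
        (∀ j, t j ∈ T) → (∀ j, s j ∈ T) →
        (∀ j j', (t j < t j' ↔ s j < s j') ∧ (t j = t j' ↔ s j = s j')) →
        (R i t ↔ R i s)) ∧
      ∃ f : Fin N → List ℕ → Bool, (∀ i, Computable (f i)) ∧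
        ∃ e : ↥T ≃ ℕ, ∀ (i : Fin N) (t : Fin (a i) → ↥T),
          R i (fun j => (t j : ℕ)) ↔ f i (List.ofFn fun j => e (t j)) = true := by
  classical
  set m : ℕ := Finset.univ.sup a with hm
  have ham : ∀ i, a i ≤ m := fun i => Finset.le_sup (Finset.mem_univ i)
  set κ := ∀ i : Fin N, (Fin (a i) → Fin m) → Bool with hκ
  haveI : Finite κ := by infer_instance
  set c : (Fin m → ℕ) → κ := fun u i g => decide (R i fun j => u (g j)) with hc
  obtain ⟨T, hTS, hT, k, hk⟩ := myRamsey m κ c Set.univ Set.infinite_univ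
  have hmonochrome : ∀ (i : Fin N) (t s : Fin (a i) → ℕ), (∀ j, t j ∈ T) → (∀ j, s j ∈ T) →
      (∀ j j', (t j < t j' ↔ s j < s j') ∧ (t j = t j' ↔ s j = s j')) → (R i t ↔ R i s) := by
    intro i t s htT hsT hpat
    have hbound : ∀ (w : Fin (a i) → ℕ) (j : Fin (a i)),
        ((Finset.univ.image w).filter (· < w j)).card < m := by
      intro w j
      have h1 : (Finset.univ.image w).filter (· < w j) ⊂ Finset.univ.image w := by
        refine (Finset.ssubset_iff_of_subset (Finset.filter_subset _ _)).mpr ?_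
        exact ⟨w j, Finset.mem_image_of_mem w (Finset.mem_univ j), by simp⟩
      have h2 : (Finset.univ.image w).card ≤ a i :=
        le_trans Finset.card_image_le (by simp)
      have h3 := Finset.card_lt_card h1
      have h4 := ham i
      omega
    set σ : Fin (a i) → Fin m :=
      fun j => ⟨((Finset.univ.image t).filter (· < t j)).card, hbound t j⟩ with hσ
    have hσs : ∀ j, (σ j : ℕ) = ((Finset.univ.image s).filter (· < s j)).card := by
      intro j
      show ((Finset.univ.image t).filter (· < t j)).card = _
      rw [Finset.filter_image, Finset.filter_image]
      have hJ : (Finset.univ.filter fun j' => t j' < t j)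
          = (Finset.univ.filter fun j' => s j' < s j) := by
        ext j'; simp [(hpat j' j).1]
      rw [hJ]
      exact card_image_eq_of_pattern t s (fun j j' => (hpat j j').2) _
    obtain ⟨u, hu1, hu2, hu3⟩ := exists_strictMono_extension (ham i) T hT t htT
    obtain ⟨u', hu'1, hu'2, hu'3⟩ := exists_strictMono_extension (ham i) T hT s hsT
    have h1 : (fun j => u (σ j)) = t := funext fun j => hu3 j (σ j) rfl
    have h2 : (fun j => u' (σ j)) = s := funext fun j => hu'3 j (σ j) (hσs j)
    have h3 := congrFun (congrFun ((hk u hu1 hu2).trans (hk u' hu'1 hu'2).symm) i) σ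
    simp only [hc] at h3
    rw [h1, h2] at h3
    exact decide_eq_decide.mp h3
  haveI hTinf : Infinite ↥T := Set.infinite_coe_iff.mpr hT
  set E : ℕ ≃o ↥T := Nat.Subtype.orderIsoOfNat T with hE
  set e : ↥T ≃ ℕ := E.symm.toEquiv with he
  have heLt : ∀ x y : ↥T, e x < e y ↔ (x : ℕ) < (y : ℕ) := by
    intro x y
    have h1 : e x < e y ↔ x < y := E.symm.lt_iff_lt
    rw [h1]
    exact Iff.symm Subtype.coe_lt_coe
  have heEq : ∀ x y : ↥T, e x = e y ↔ (x : ℕ) = (y : ℕ) := by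
    intro x y
    constructor
    · intro h; exact Subtype.ext_iff.mp (e.injective h)
    · intro h; exact congrArg e (Subtype.ext h)
  set pat : ∀ i : Fin N, (Fin (a i) → ↥T) → (Fin (a i) → Fin (a i) → Bool × Bool) :=
    fun i t j j' => (decide ((t j : ℕ) < (t j' : ℕ)), decide ((t j : ℕ) = (t j' : ℕ))) with hpat
  set c' : ∀ i : Fin N, (Fin (a i) → Fin (a i) → Bool × Bool) → Bool := fun i Mx =>
    if h : ∃ t : Fin (a i) → ↥T, pat i t = Mx then decide (R i fun j => (h.choose j : ℕ))
    else false with hc'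
  set hmapF : ∀ i : Fin N, List ℕ → (Fin (a i) → Fin (a i) → Bool × Bool) := fun i L j j' =>
    (decide (L.getD (j : ℕ) 0 < L.getD (j' : ℕ) 0),
     decide (L.getD (j : ℕ) 0 = L.getD (j' : ℕ) 0)) with hmapFdef
  refine ⟨T, hT, hmonochrome, fun i L => c' i (hmapF i L), ?_, e, ?_⟩
  · intro i
    have g1 : Primrec (fun q : (List ℕ × Fin (a i)) × Fin (a i) => q.1.1.getD (q.1.2 : ℕ) 0) :=
      (Primrec.list_getD 0).comp (Primrec.fst.comp Primrec.fst)
        (Primrec.fin_val.comp (Primrec.snd.comp Primrec.fst))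
    have g2 : Primrec (fun q : (List ℕ × Fin (a i)) × Fin (a i) => q.1.1.getD (q.2 : ℕ) 0) :=
      (Primrec.list_getD 0).comp (Primrec.fst.comp Primrec.fst)
        (Primrec.fin_val.comp Primrec.snd)
    have hq : Primrec (fun q : (List ℕ × Fin (a i)) × Fin (a i) =>
        (decide (q.1.1.getD (q.1.2 : ℕ) 0 < q.1.1.getD (q.2 : ℕ) 0),
         decide (q.1.1.getD (q.1.2 : ℕ) 0 = q.1.1.getD (q.2 : ℕ) 0))) :=
      (Primrec.nat_lt.decide.comp g1 g2).pair (Primrec.eq.decide.comp g1 g2)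
    have hprim : Primrec (hmapF i) := Primrec.fin_curry.mpr (Primrec.fin_curry.mpr hq)
    exact ((Primrec.dom_finite (c' i)).comp hprim).to_comp
  · intro i t
    have hL : ∀ j : Fin (a i), (List.ofFn fun j => e (t j)).getD (j : ℕ) 0 = e (t j) := by
      intro j
      have hlen : (j : ℕ) < (List.ofFn fun j => e (t j)).length := by
        simp [List.length_ofFn]
      rw [List.getD_eq_getElem _ _ hlen]
      simp
    have hpatL : hmapF i (List.ofFn fun j => e (t j)) = pat i t := by
      funext j j'
      simp only [hmapFdef, hpat, hL]
      refine Prod.ext ?_ ?_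
      · exact decide_eq_decide.mpr (heLt _ _)
      · exact decide_eq_decide.mpr (heEq _ _)
    have hex : ∃ t' : Fin (a i) → ↥T, pat i t' = pat i t := ⟨t, rfl⟩
    have hval : c' i (pat i t) = decide (R i fun j => (hex.choose j : ℕ)) := by
      simp only [hc']
      rw [dif_pos hex]
    have hspec := hex.choose_spec
    have hpatiff : ∀ j j', ((hex.choose j : ℕ) < (hex.choose j' : ℕ) ↔ (t j : ℕ) < (t j' : ℕ))
        ∧ ((hex.choose j : ℕ) = (hex.choose j' : ℕ) ↔ (t j : ℕ) = (t j' : ℕ)) := by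
      intro j j'
      have h0 := congrFun (congrFun hspec j) j'
      simp only [hpat, Prod.mk.injEq] at h0
      exact ⟨decide_eq_decide.mp h0.1, decide_eq_decide.mp h0.2⟩
    have hR : R i (fun j => (hex.choose j : ℕ)) ↔ R i (fun j => (t j : ℕ)) :=
      hmonochrome i _ _ (fun j => (hex.choose j).2) (fun j => (t j).2) hpatiff
    show _ ↔ c' i (hmapF i (List.ofFn fun j => e (t j))) = true
    rw [hpatL, hval]
    rw [decide_eq_true_eq]
    exact hR.symm
end

section
/- For an infinite set A ⊆ ℕ, in the shuffle sum Sh(A), the set of sizes of finite maximal successor chains is exactly A; that is, Bk(Sh(A)) = A. -/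
/-- `y` is the immediate successor of `x`. -/
def SuccRel {X : Type*} [LinearOrder X] (x y : X) : Prop :=
  x < y ∧ ¬∃ z, x < z ∧ z < y

/-- `Bk X` is the set of sizes of finite maximal successor chains of the linear
order `X`: those `n > 0` for which there are `n` consecutive successive elements whose
first element has no immediate predecessor and whose last has no immediate successor. -/
def Bk (X : Type*) [LinearOrder X] : Set ℕ :=
  {n | 0 < n ∧ ∃ t : ℕ → X,
    (∀ j, j + 1 < n → SuccRel (t j) (t (j + 1))) ∧
    (¬∃ z, SuccRel z (t 0)) ∧ ¬∃ z, SuccRel (t (n - 1)) z}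

section Aux

variable {f : ℚ → ℕ}

lemma sh_lt_iff {p q : ℚ} {i : Fin (f p)} {j : Fin (f q)} :
    (toLex ⟨p, i⟩ : Lex (Σ q : ℚ, Fin (f q))) < toLex ⟨q, j⟩ ↔ p < q ∨ p = q ∧ (i : ℕ) < j := by
  rw [Sigma.Lex.lt_def]
  constructor
  · rintro (h | ⟨h, hij⟩)
    · exact Or.inl h
    · obtain rfl : p = q := h
      exact Or.inr ⟨rfl, hij⟩
  · rintro (h | ⟨rfl, hij⟩)
    · exact Or.inl h
    · exact Or.inr ⟨rfl, hij⟩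

lemma sh_succRel_iff (hf0 : ∀ q, 0 < f q) {p q : ℚ} {i : Fin (f p)} {j : Fin (f q)}
    (h : SuccRel (toLex ⟨p, i⟩ : Lex (Σ q : ℚ, Fin (f q))) (toLex ⟨q, j⟩)) :
    p = q ∧ (j : ℕ) = i + 1 := by
  obtain ⟨hlt, hno⟩ := h
  rw [sh_lt_iff] at hlt
  rcases hlt with hpq | ⟨rfl, hij⟩
  · exfalso
    obtain ⟨r, hpr, hrq⟩ := exists_rat_btwn hpq
    exact hno ⟨toLex ⟨r, ⟨0, hf0 r⟩⟩,
      sh_lt_iff.2 (Or.inl hpr), sh_lt_iff.2 (Or.inl hrq)⟩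
  · refine ⟨rfl, ?_⟩
    by_contra hne
    have h1 : (i : ℕ) + 1 < j := by omega
    have h2 : (i : ℕ) + 1 < f p := lt_trans h1 j.isLt
    exact hno ⟨toLex ⟨p, ⟨(i : ℕ) + 1, h2⟩⟩,
      sh_lt_iff.2 (Or.inr ⟨rfl, Nat.lt_succ_self _⟩),
      sh_lt_iff.2 (Or.inr ⟨rfl, h1⟩)⟩

lemma sh_succRel_of {q : ℚ} {i j : Fin (f q)} (hij : (j : ℕ) = i + 1) :
    SuccRel (toLex ⟨q, i⟩ : Lex (Σ q : ℚ, Fin (f q))) (toLex ⟨q, j⟩) := by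
  refine ⟨sh_lt_iff.2 (Or.inr ⟨rfl, by omega⟩), ?_⟩
  rintro ⟨z, hz1, hz2⟩
  rcases h : ofLex z with ⟨r, k⟩
  rw [show z = toLex ⟨r, k⟩ from congrArg toLex h] at hz1 hz2
  rw [sh_lt_iff] at hz1 hz2
  rcases hz1 with h1 | ⟨rfl, h1⟩ <;> rcases hz2 with h2 | ⟨h2, h2'⟩ <;>
    first
      | exact absurd (h1.trans h2) (lt_irrefl _)
      | (subst h2; exact absurd h1 (lt_irrefl _))
      | exact absurd h2 (lt_irrefl _)
      | omega

lemma sh_no_pred (hf0 : ∀ q, 0 < f q) {q : ℚ} {i : Fin (f q)} (hi : (i : ℕ) = 0) :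
    ¬∃ z, SuccRel z (toLex ⟨q, i⟩ : Lex (Σ q : ℚ, Fin (f q))) := by
  rintro ⟨z, hz⟩
  rcases h' : ofLex z with ⟨r, k⟩
  rw [show z = toLex ⟨r, k⟩ from congrArg toLex h'] at hz
  obtain ⟨rfl, h⟩ := sh_succRel_iff hf0 hz
  omega

lemma sh_no_succ (hf0 : ∀ q, 0 < f q) {q : ℚ} {i : Fin (f q)} (hi : (i : ℕ) = f q - 1) :
    ¬∃ z, SuccRel (toLex ⟨q, i⟩ : Lex (Σ q : ℚ, Fin (f q))) z := by
  rintro ⟨z, hz⟩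
  rcases h' : ofLex z with ⟨r, k⟩
  rw [show z = toLex ⟨r, k⟩ from congrArg toLex h'] at hz
  obtain ⟨rfl, h⟩ := sh_succRel_iff hf0 hz
  have := k.isLt
  have := hf0 q
  omega

end Aux

/-- For an infinite set `A` of positive integers, the shuffle sum `Sh(A)` — realized as
the lexicographic sum over ℚ of finite chains whose sizes take each value of `A` on a
dense set of rationals and only values in `A` — has `Bk (Sh A) = A`. -/
theorem bk_shuffle_sum_eq (A : Set ℕ) (hA : A.Infinite) (hpos : ∀ n ∈ A, 0 < n)
    (f : ℚ → ℕ) (hf : ∀ q, f q ∈ A)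
    (hdense : ∀ n ∈ A, ∀ a b : ℚ, a < b → ∃ q, a < q ∧ q < b ∧ f q = n) :
    Bk (Lex (Σ q : ℚ, Fin (f q))) = A := by
  have hf0 : ∀ q, 0 < f q := fun q => hpos _ (hf q)
  ext n
  constructor
  · rintro ⟨hn, t, hchain, hpred, hsucc⟩
    rcases h0 : ofLex (t 0) with ⟨q, i0⟩
    have ht0 : t 0 = toLex ⟨q, i0⟩ := congrArg toLex h0
    -- first element has index 0
    have hi0 : (i0 : ℕ) = 0 := by
      by_contra h
      have hpos' : 0 < (i0 : ℕ) := Nat.pos_of_ne_zero h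
      have hlt : (i0 : ℕ) - 1 < f q := lt_trans (by omega) i0.isLt
      exact hpred ⟨toLex ⟨q, ⟨(i0 : ℕ) - 1, hlt⟩⟩, ht0 ▸ sh_succRel_of (by simp; try omega)⟩
    -- chain stays in fiber q with consecutive indices
    have key : ∀ j, j < n → ∃ ij : Fin (f q), (ij : ℕ) = j ∧ t j = toLex ⟨q, ij⟩ := by
      intro j
      induction j with
      | zero => exact fun _ => ⟨i0, hi0, ht0⟩
      | succ j ih =>
        intro hj
        obtain ⟨ij, hij, htj⟩ := ih (by omega)
        have hs := hchain j hj
        rcases h1 : ofLex (t (j + 1)) with ⟨q', i'⟩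
        have ht1 : t (j + 1) = toLex ⟨q', i'⟩ := congrArg toLex h1
        rw [htj, ht1] at hs
        obtain ⟨rfl, hi'⟩ := sh_succRel_iff hf0 hs
        exact ⟨i', by omega, ht1⟩
    obtain ⟨ilast, hilast, htlast⟩ := key (n - 1) (by omega)
    have hle : n - 1 < f q := hilast ▸ ilast.isLt
    have : ¬ (n < f q) := by
      intro hnf
      exact hsucc ⟨toLex ⟨q, ⟨n, hnf⟩⟩, htlast ▸ sh_succRel_of (by simp; try omega)⟩
    have : n = f q := by omega
    exact this ▸ hf q
  · intro hnA
    have hn : 0 < n := hpos n hnA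
    obtain ⟨q, -, -, hq⟩ := hdense n hnA 0 1 (by norm_num)
    refine ⟨hn, fun j => toLex ⟨q, ⟨min j (n - 1), by omega⟩⟩, ?_, ?_, ?_⟩
    · intro j hj
      exact sh_succRel_of (by simp; try omega)
    · exact sh_no_pred hf0 (by simp; try omega)
    · exact sh_no_succ hf0 (by simp; try omega)
end

section
/- If S ⊆ T are sets of positive integers, then the shuffle sum Sh(S) embeds into Sh(T) as a suborder, via an embedding that maps each finite block of size n ∈ S onto a full block of size n in Sh(T) and such that the image intersects 1-blocks of Sh(T) either trivially or fully. -/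
open Denumerable Encodable

lemma exists_with_value {g : ℚ → ℕ} {n : ℕ}
    (hgd : ∀ a b : ℚ, a < b → ∃ q, a < q ∧ q < b ∧ g q = n)
    (A B : Finset ℚ) (hAB : ∀ a ∈ A, ∀ b ∈ B, a < b) :
    ∃ q, (∀ a ∈ A, a < q) ∧ (∀ b ∈ B, q < b) ∧ g q = n := by
  rcases A.eq_empty_or_nonempty with hA | hA <;>
    rcases B.eq_empty_or_nonempty with hB | hB
  · obtain ⟨q, _, _, hq⟩ := hgd 0 1 one_pos
    exact ⟨q, by simp [hA], by simp [hB], hq⟩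
  · obtain ⟨q, h1, h2, hq⟩ := hgd (B.min' hB - 1) (B.min' hB) (by linarith)
    exact ⟨q, by simp [hA], fun b hb => lt_of_lt_of_le h2 (B.min'_le b hb), hq⟩
  · obtain ⟨q, h1, h2, hq⟩ := hgd (A.max' hA) (A.max' hA + 1) (by linarith)
    exact ⟨q, fun a ha => lt_of_le_of_lt (A.le_max' a ha) h1, by simp [hB], hq⟩
  · obtain ⟨q, h1, h2, hq⟩ := hgd (A.max' hA) (B.min' hB)
      (hAB _ (A.max'_mem hA) _ (B.min'_mem hB))
    exact ⟨q, fun a ha => lt_of_le_of_lt (A.le_max' a ha) h1,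
      fun b hb => lt_of_lt_of_le h2 (B.min'_le b hb), hq⟩

open scoped Classical in
noncomputable def auxF (f g : ℚ → ℕ) : ℕ → ℚ
  | n =>
    if h : ∃ q : ℚ, (∀ m, m < n →
        ((ofNat ℚ m : ℚ) < ofNat ℚ n → auxF f g m < q) ∧
        ((ofNat ℚ n : ℚ) < ofNat ℚ m → q < auxF f g m)) ∧
        g q = f (ofNat ℚ n)
    then h.choose else 0

lemma auxF_good (f g : ℚ → ℕ)
    (hgd : ∀ n, n ∈ Set.range f → ∀ a b : ℚ, a < b → ∃ q, a < q ∧ q < b ∧ g q = n) :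
    ∀ n : ℕ, (∀ m, m < n → ((ofNat ℚ m : ℚ) < ofNat ℚ n → auxF f g m < auxF f g n) ∧
        ((ofNat ℚ n : ℚ) < ofNat ℚ m → auxF f g n < auxF f g m)) ∧
      g (auxF f g n) = f (ofNat ℚ n) := by
  intro n
  induction n using Nat.strong_induction_on with
  | _ n ih =>
    have key : ∀ m m', m < n → m' < n → (ofNat ℚ m : ℚ) < ofNat ℚ m' →
        auxF f g m < auxF f g m' := by
      intro m m' hm hm' hlt
      rcases lt_trichotomy m m' with h | h | h
      · exact ((ih m' hm').1 m h).1 hlt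
      · subst h; exact absurd hlt (lt_irrefl _)
      · exact ((ih m hm).1 m' h).2 hlt
    have hex : ∃ q : ℚ, (∀ m, m < n →
        ((ofNat ℚ m : ℚ) < ofNat ℚ n → auxF f g m < q) ∧
        ((ofNat ℚ n : ℚ) < ofNat ℚ m → q < auxF f g m)) ∧
        g q = f (ofNat ℚ n) := by
      classical
      obtain ⟨q, hqA, hqB, hq⟩ := exists_with_value
        (hgd (f (ofNat ℚ n)) ⟨_, rfl⟩)
        (((Finset.range n).filter (fun m => (ofNat ℚ m : ℚ) < ofNat ℚ n)).image (auxF f g))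
        (((Finset.range n).filter (fun m => (ofNat ℚ n : ℚ) < ofNat ℚ m)).image (auxF f g))
        (by
          intro a ha b hb
          simp only [Finset.mem_image, Finset.mem_filter, Finset.mem_range] at ha hb
          obtain ⟨m, ⟨hm, hm2⟩, rfl⟩ := ha
          obtain ⟨m', ⟨hm', hm'2⟩, rfl⟩ := hb
          exact key m m' hm hm' (hm2.trans hm'2))
      refine ⟨q, fun m hm => ⟨fun h => ?_, fun h => ?_⟩, hq⟩
      · exact hqA _ (Finset.mem_image_of_mem _
          (Finset.mem_filter.2 ⟨Finset.mem_range.2 hm, h⟩))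
      · exact hqB _ (Finset.mem_image_of_mem _
          (Finset.mem_filter.2 ⟨Finset.mem_range.2 hm, h⟩))
    have hdef : auxF f g n = hex.choose := by
      rw [auxF]; exact dif_pos hex
    obtain ⟨h1, h2⟩ := hex.choose_spec
    rw [hdef] at *
    exact ⟨h1, h2⟩


/-- If `S ⊆ T` are sets of positive integers, then the shuffle sum `Sh(S)` (realized
as the lexicographic sum over ℚ of finite chains with sizes given by `f`, each size in
`S` occurring densely) embeds into `Sh(T)` (given by `g`) as a suborder, via an
embedding that maps each block of size `n ∈ S` onto a full block of size `n` of
`Sh(T)`, and whose image meets each 1-block of `Sh(T)` trivially or fully. -/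
theorem shuffle_sum_embeds (S T : Set ℕ) (hST : S ⊆ T) (hposT : ∀ n ∈ T, 0 < n)
    (f g : ℚ → ℕ)
    (hf : ∀ q, f q ∈ S) (hfd : ∀ n ∈ S, ∀ a b : ℚ, a < b → ∃ q, a < q ∧ q < b ∧ f q = n)
    (hg : ∀ q, g q ∈ T) (hgd : ∀ n ∈ T, ∀ a b : ℚ, a < b → ∃ q, a < q ∧ q < b ∧ g q = n) :
    ∃ e : Lex (Σ q : ℚ, Fin (f q)) ↪o Lex (Σ q : ℚ, Fin (g q)),
      (∀ q : ℚ, ∃ q' : ℚ, ∃ h : f q = g q',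
        ∀ j : Fin (f q), e (toLex ⟨q, j⟩) = toLex ⟨q', Fin.cast h j⟩) ∧
      (∀ x y : Lex (Σ q : ℚ, Fin (g q)), BlockRel x y →
        (∃ a, e a = x) → ∃ b, e b = y) := by
  classical
  have hgd' : ∀ n, n ∈ Set.range f → ∀ a b : ℚ, a < b → ∃ q, a < q ∧ q < b ∧ g q = n := by
    rintro n ⟨q0, rfl⟩; exact hgd _ (hST (hf q0))
  have good := auxF_good f g hgd'
  have hsurj : Function.Surjective (ofNat ℚ) :=
    fun q => ⟨_, Denumerable.ofNat_encode q⟩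
  set enc : ℚ → ℕ := fun q => (hsurj q).choose with henc_def
  have henc : ∀ q, ofNat ℚ (enc q) = q := fun q => (hsurj q).choose_spec
  set φ : ℚ → ℚ := fun q => auxF f g (enc q) with hφ
  have hval : ∀ q : ℚ, f q = g (φ q) := by
    intro q
    have := (good (enc q)).2
    rw [henc q] at this
    exact this.symm
  have hmono : StrictMono φ := by
    intro q q' hlt
    rcases lt_trichotomy (enc q) (enc q') with h | h | h
    · have := ((good (enc q')).1 _ h).1
      rw [henc q, henc q'] at this
      exact this hlt
    · exact absurd (by rw [← henc q, ← henc q', h]) (ne_of_lt hlt)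
    · have := ((good (enc q)).1 _ h).2
      rw [henc q, henc q'] at this
      exact this hlt
  set E : Lex (Σ q : ℚ, Fin (f q)) → Lex (Σ q : ℚ, Fin (g q)) :=
    fun x => toLex ⟨φ (ofLex x).1, Fin.cast (hval (ofLex x).1) (ofLex x).2⟩ with hE
  have hEmono : StrictMono E := by
    rintro ⟨qa, ia⟩ ⟨qb, ib⟩ hab
    change toLex (⟨qa, ia⟩ : (q : ℚ) × Fin (f q)) < toLex ⟨qb, ib⟩ at hab
    change E (toLex ⟨qa, ia⟩) < E (toLex ⟨qb, ib⟩)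
    rw [Sigma.Lex.lt_def] at hab ⊢
    rcases hab with h | ⟨h, h2⟩
    · exact Or.inl (hmono h)
    · change qa = qb at h; subst h
      exact Or.inr ⟨rfl, by exact h2⟩
  refine ⟨OrderEmbedding.ofStrictMono E hEmono, fun q => ⟨φ q, hval q, fun j => rfl⟩, ?_⟩
  have hblock : ∀ (u v : ℚ) (i' : Fin (g u)) (j' : Fin (g v)), u < v →
      ¬ BlockRel (L := Lex (Σ q : ℚ, Fin (g q))) (toLex ⟨u, i'⟩) (toLex ⟨v, j'⟩) := by
    intro u v i' j' huv hfin
    have hinj : Set.InjOn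
        (fun r : ℚ => (toLex ⟨r, ⟨0, hposT _ (hg r)⟩⟩ : Lex (Σ q : ℚ, Fin (g q))))
        (Set.Ioo u v) := by
      intro r _ r' _ hrr'
      exact congrArg (fun z => (ofLex z).1) hrr'
    have himg : ((fun r : ℚ => (toLex ⟨r, ⟨0, hposT _ (hg r)⟩⟩ : Lex (Σ q : ℚ, Fin (g q)))) ''
        Set.Ioo u v).Infinite := (Set.Ioo_infinite huv).image hinj
    refine himg.mono ?_ hfin
    rintro z ⟨r, ⟨hr1, hr2⟩, rfl⟩
    exact Or.inl ⟨Sigma.Lex.lt_def.2 (Or.inl hr1), Sigma.Lex.lt_def.2 (Or.inl hr2)⟩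
  intro x y hxy hex
  obtain ⟨a, hax⟩ := hex
  have hq1 : φ (ofLex a).1 = (ofLex x).1 := congrArg (fun z => (ofLex z).1) hax
  have hqxy : (ofLex x).1 = (ofLex y).1 := by
    by_contra hne
    rcases lt_or_gt_of_ne hne with h | h
    · exact hblock _ _ (ofLex x).2 (ofLex y).2 h hxy
    · refine hblock _ _ (ofLex y).2 (ofLex x).2 h ?_
      unfold BlockRel at hxy ⊢
      exact hxy.subset fun z hz => hz.symm
  have h' : g (ofLex y).1 = f (ofLex a).1 := by
    rw [← hqxy, ← hq1]; exact (hval _).symm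
  refine ⟨toLex (⟨(ofLex a).1, Fin.cast h' (ofLex y).2⟩ : Σ q : ℚ, Fin (f q)), ?_⟩
  have e1 : φ (ofLex a).1 = (ofLex y).1 := hq1.trans hqxy
  show toLex (⟨φ (ofLex a).1, Fin.cast (hval (ofLex a).1) (Fin.cast h' (ofLex y).2)⟩ :
        Σ q : ℚ, Fin (g q))
      = toLex (⟨(ofLex y).1, (ofLex y).2⟩ : Σ q : ℚ, Fin (g q))
  refine congrArg toLex (Sigma.ext e1 ?_)
  rw [Fin.heq_ext_iff (congrArg g e1)]
  simp
end

section
/- Every ordering that is order-isomorphic to a dense (in the sense of a positive notion of density) subset of ℚ has no pair of consecutive elements; consequently such a subset has order type η, 1+η, or η+1. -/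
open Classical in
/-- The number of indices `k < n` whose enumerated rational `φ k` satisfies `P`. -/
noncomputable def enumCount (φ : ℕ → ℚ) (P : ℚ → Prop) (n : ℕ) : ℝ :=
  ∑ k ∈ Finset.range n, if P (φ k) then (1 : ℝ) else 0

/-- Fix a computable bijective enumeration `φ` of ℚ whose associated notion of density
is positive (every nonempty open interval has positive lower density). Then every
`δ_φ`-dense subset `D` of ℚ (density 1) has no pair of consecutive elements, and
consequently has order type η, 1+η, or η+1. -/
theorem positive_density_dense_subset_no_successors
    (φ : ℕ → ℚ) (hφ : Function.Bijective φ) (hcomp : Computable φ)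
    (hpositive : ∀ a b : ℚ, a < b →
      0 < Filter.liminf (fun n => enumCount φ (fun q => a < q ∧ q < b) n / n) Filter.atTop)
    (D : Set ℚ)
    (hD : Filter.Tendsto (fun n => enumCount φ (fun q => q ∈ D) n / n)
      Filter.atTop (nhds 1)) :
    (∀ p ∈ D, ∀ q ∈ D, p < q → ∃ r ∈ D, p < r ∧ r < q) ∧
    (Nonempty (↥D ≃o ℚ) ∨ Nonempty (↥D ≃o WithBot ℚ) ∨ Nonempty (↥D ≃o WithTop ℚ)) := by
  classical
  have hbetween : ∀ a b : ℚ, a < b → ∃ r ∈ D, a < r ∧ r < b := by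
    intro a b hab
    by_contra h
    push_neg at h
    have hdisj : ∀ q : ℚ, (a < q ∧ q < b) → q ∉ D := by
      intro q hq hqD
      exact absurd hq.2 (not_lt.mpr (h q hqD hq.1))
    have key : ∀ n : ℕ, enumCount φ (fun q => a < q ∧ q < b) n / n
        ≤ 1 - enumCount φ (fun q => q ∈ D) n / n := by
      intro n
      rcases Nat.eq_zero_or_pos n with rfl | hn
      · simp [enumCount]
      · have hnpos : (0:ℝ) < n := by exact_mod_cast hn
        have hsum : enumCount φ (fun q => a < q ∧ q < b) n
            + enumCount φ (fun q => q ∈ D) n ≤ (n : ℝ) := by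
          unfold enumCount
          rw [← Finset.sum_add_distrib]
          refine le_trans (Finset.sum_le_sum (g := fun _ => (1:ℝ)) ?_) (by simp)
          intro k _
          by_cases h1 : a < φ k ∧ φ k < b
          · have h2 := hdisj _ h1
            simp [h1, h2]
          · by_cases h2 : φ k ∈ D <;> simp [h1, h2]
        have h1 : enumCount φ (fun q => a < q ∧ q < b) n / n
            + enumCount φ (fun q => q ∈ D) n / n ≤ 1 := by
          rw [← add_div, div_le_one hnpos]
          exact hsum
        linarith
    have hlim0 : Filter.Tendsto (fun n => 1 - enumCount φ (fun q => q ∈ D) n / n)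
        Filter.atTop (nhds 0) := by
      have := (tendsto_const_nhds (x := (1:ℝ)) (f := Filter.atTop (α := ℕ))).sub hD
      simpa using this
    have hu : Filter.IsBoundedUnder (· ≥ ·) Filter.atTop
        (fun n => enumCount φ (fun q => a < q ∧ q < b) n / n) := by
      refine Filter.isBoundedUnder_of ⟨0, fun n => ?_⟩
      have h0 : (0:ℝ) ≤ enumCount φ (fun q => a < q ∧ q < b) n := by
        unfold enumCount
        exact Finset.sum_nonneg fun k _ => by positivity
      positivity
    have hv : Filter.IsCoboundedUnder (· ≥ ·) Filter.atTop
        (fun n => 1 - enumCount φ (fun q => q ∈ D) n / n) :=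
      (hlim0.isBoundedUnder_le).isCoboundedUnder_ge
    have hle := Filter.liminf_le_liminf (Filter.Eventually.of_forall key) hu hv
    rw [hlim0.liminf_eq] at hle
    exact absurd (lt_of_lt_of_le (hpositive a b hab) hle) (lt_irrefl 0)
  refine ⟨fun p _ q _ hpq => hbetween p q hpq, Or.inl ?_⟩
  obtain ⟨r0, hr0, _, _⟩ := hbetween 0 1 (by norm_num)
  have : Nonempty ↥D := ⟨⟨r0, hr0⟩⟩
  have : DenselyOrdered ↥D := by
    constructor
    rintro ⟨p, hp⟩ ⟨q, hq⟩ h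
    obtain ⟨r, hr, h1, h2⟩ := hbetween p q h
    exact ⟨⟨r, hr⟩, h1, h2⟩
  have : NoMinOrder ↥D := by
    constructor
    rintro ⟨q, hq⟩
    obtain ⟨r, hr, _, h2⟩ := hbetween (q - 1) q (by linarith)
    exact ⟨⟨r, hr⟩, h2⟩
  have : NoMaxOrder ↥D := by
    constructor
    rintro ⟨q, hq⟩
    obtain ⟨r, hr, h1, _⟩ := hbetween q (q + 1) (by linarith)
    exact ⟨⟨r, hr⟩, h1⟩
  exact Order.iso_of_countable_dense ↥D ℚ
end
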